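/- arXiv:1506.03266 — 12 statements merged into one kernel-verified Lean document; each statement's English description precedes it below -/
import Mathlib

section
/- First Correspondence Theorem, direction 1: Let (S,R) be an argumentation framework and let (h,hN) be a CN-valuation that is a model of Δ_A. Define λ_h : S → {in,out,und} by λ_h(x) = in if h x = true, λ_h(x) = out if hN x = true, and λ_h(x) = und if h x = false and hN x = false. Then λ_h is well defined (exactly one case holds for each x) and λ_h is a legitimate Caminada labelling of (S,R). -/
/-- The three Caminada labels. -/
inductive Lab
  | inn | out | und
  deriving DecidableEq

/-- A legitimate Caminada labelling of an argumentation framework `(S, R)`. -/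
def Legitimate {S : Type*} (R : S → S → Prop) (lam : S → Lab) : Prop :=
  ∀ x : S,
    (lam x = Lab.inn ↔ ∀ z, R z x → lam z = Lab.out) ∧
    (lam x = Lab.out ↔ ∃ z, R z x ∧ lam z = Lab.inn) ∧
    (lam x = Lab.und ↔ ((∀ z, R z x → lam z ≠ Lab.inn) ∧ ∃ z, R z x ∧ lam z = Lab.und))

/-- A CN-valuation: `hN x = true` implies `h x = false`. -/
def IsCNValuation {S : Type*} (h hN : S → Bool) : Prop :=
  ∀ x, hN x = true → h x = false

/-- `(h, hN)` is a model of the theory `Δ_A` of the framework `(S, R)`. -/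
def IsModelDelta {S : Type*} (R : S → S → Prop) (h hN : S → Bool) : Prop :=
  (∀ x, (∀ z, ¬ R z x) → h x = true) ∧
  (∀ x, h x = true ↔ ∀ z, R z x → hN z = true) ∧
  (∀ z x, R z x → h z = true → hN x = true) ∧
  (∀ x, (∀ z, R z x → h z = false) → (∃ z, R z x ∧ hN z = false) →
    h x = false ∧ hN x = false)

/-- First Correspondence Theorem, direction 1: a model of `Δ_A` induces a
well-defined legitimate Caminada labelling. -/
theorem first_correspondence_dir1
    {S : Type*} [Fintype S] [Nonempty S] (R : S → S → Prop)
    (h hN : S → Bool)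
    (hval : IsCNValuation h hN) (hmod : IsModelDelta R h hN) :
    (∀ x : S,
      (h x = true ∧ ¬ hN x = true ∧ ¬ (h x = false ∧ hN x = false)) ∨
      (hN x = true ∧ ¬ h x = true ∧ ¬ (h x = false ∧ hN x = false)) ∨
      ((h x = false ∧ hN x = false) ∧ ¬ h x = true ∧ ¬ hN x = true)) ∧
    Legitimate R (fun x =>
      if h x = true then Lab.inn else if hN x = true then Lab.out else Lab.und) := by

  obtain ⟨hm1, hm2, hm3, hm4⟩ := hmod
  set lam : S → Lab := fun x =>
    if h x = true then Lab.inn else if hN x = true then Lab.out else Lab.und with hlam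
  have lamInn : ∀ x, lam x = Lab.inn ↔ h x = true := by
    intro x; simp only [hlam]
    by_cases hx : h x = true
    · simp [hx]
    · by_cases hnx : hN x = true <;> simp [hx, hnx]
  have lamOut : ∀ x, lam x = Lab.out ↔ hN x = true := by
    intro x; simp only [hlam]
    by_cases hnx : hN x = true
    · simp [hval x hnx, hnx]
    · by_cases hx : h x = true <;> simp [hx, hnx]
  have lamUnd : ∀ x, lam x = Lab.und ↔ (h x = false ∧ hN x = false) := by
    intro x; simp only [hlam]
    by_cases hx : h x = true
    · simp [hx]
    · by_cases hnx : hN x = true <;> simp [hx, hnx] <;> simp_all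
  constructor
  · intro x
    by_cases hnx : hN x = true
    · right; left
      exact ⟨hnx, by simp [hval x hnx], fun ⟨_, c⟩ => by simp_all⟩
    · by_cases hx : h x = true
      · left; exact ⟨hx, hnx, fun ⟨c, _⟩ => by simp_all⟩
      · right; right
        exact ⟨⟨by simpa using hx, by simpa using hnx⟩, hx, hnx⟩
  · intro x
    refine ⟨?_, ?_, ?_⟩
    · rw [lamInn]
      constructor
      · intro hx z hz
        rw [lamOut]
        exact (hm2 x).mp hx z hz
      · intro hall
        exact (hm2 x).mpr fun z hz => (lamOut z).mp (hall z hz)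
    · rw [lamOut]
      constructor
      · intro hnx
        by_contra hno
        push_neg at hno
        have hall : ∀ z, R z x → h z = false := by
          intro z hz
          by_contra hc
          have : h z = true := by simpa using hc
          exact hno z hz ((lamInn z).mpr this)
        have hxf : h x = false := hval x hnx
        have : ∃ z, R z x ∧ hN z = false := by
          by_contra hc
          push_neg at hc
          have : h x = true := (hm2 x).mpr fun z hz => by
            have := hc z hz; simpa using this
          simp [this] at hxf
        have := hm4 x hall this
        simp [this.2] at hnx
      · rintro ⟨z, hz, hzin⟩
        exact hm3 z x hz ((lamInn z).mp hzin)
    · rw [lamUnd]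
      constructor
      · rintro ⟨hxf, hnxf⟩
        have hnoin : ∀ z, R z x → lam z ≠ Lab.inn := by
          intro z hz hc
          have := hm3 z x hz ((lamInn z).mp hc)
          simp [this] at hnxf
        refine ⟨hnoin, ?_⟩
        have : ∃ z, R z x ∧ hN z = false := by
          by_contra hc
          push_neg at hc
          have : h x = true := (hm2 x).mpr fun z hz => by
            have := hc z hz; simpa using this
          simp [this] at hxf
        obtain ⟨z, hz, hnz⟩ := this
        have hzf : h z = false := by
          by_contra hc
          exact hnoin z hz ((lamInn z).mpr (by simpa using hc))
        exact ⟨z, hz, (lamUnd z).mpr ⟨hzf, hnz⟩⟩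
      · rintro ⟨hnoin, z, hz, hzund⟩
        have hall : ∀ w, R w x → h w = false := by
          intro w hw
          by_contra hc
          exact hnoin w hw ((lamInn w).mpr (by simpa using hc))
        obtain ⟨hzf, hnzf⟩ := (lamUnd z).mp hzund
        exact hm4 x hall ⟨z, hz, hnzf⟩
end

section
/- First Correspondence Theorem, direction 2: Let (S,R) be an argumentation framework and let λ be a legitimate Caminada labelling of (S,R). Define h_λ, hN_λ : S → Bool by h_λ x = true iff λ(x) = in and hN_λ x = true iff λ(x) = out. Then (h_λ, hN_λ) is a CN-valuation (i.e., hN_λ x = true implies h_λ x = false) and it is a model of Δ_A. -/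
/-- First Correspondence Theorem, direction 2: a legitimate Caminada labelling
induces a CN-valuation which is a model of `Δ_A`. -/
theorem first_correspondence_dir2
    {S : Type*} [Fintype S] [Nonempty S] (R : S → S → Prop)
    (lam : S → Lab) (hlam : Legitimate R lam) :
    IsCNValuation (fun x => decide (lam x = Lab.inn)) (fun x => decide (lam x = Lab.out)) ∧
    IsModelDelta R (fun x => decide (lam x = Lab.inn)) (fun x => decide (lam x = Lab.out)) := by
  constructor
  · intro x hx
    simp only [decide_eq_true_eq] at hx ⊢
    simp [hx]
  refine ⟨?_, ?_, ?_, ?_⟩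
  · intro x hx
    simp only [decide_eq_true_eq]
    exact (hlam x).1.2 (fun z hz => absurd hz (hx z))
  · intro x
    simp only [decide_eq_true_eq]
    constructor
    · intro h z hz
      exact (hlam x).1.1 h z hz
    · intro h
      exact (hlam x).1.2 h
  · intro z x hz h
    simp only [decide_eq_true_eq] at h ⊢
    exact (hlam x).2.1.2 ⟨z, hz, h⟩
  · intro x h1 h2
    simp only [decide_eq_false_iff_not, decide_eq_true_eq] at h1 h2 ⊢
    have hund : lam x = Lab.und := by
      obtain ⟨z, hz, hzo⟩ := h2
      have hzu : lam z = Lab.und := by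
        cases hlz : lam z with
        | inn => exact absurd hlz (h1 z hz)
        | out => exact absurd hlz hzo
        | und => rfl
      exact (hlam x).2.2.2 ⟨fun w hw => h1 w hw, z, hz, hzu⟩
    simp [hund]
end

section
/- Consistency of Δ_A: For every argumentation framework (S,R) there exists a CN-valuation (h,hN) that is a model of Δ_A (i.e., the theory Δ_A is CN-consistent). -/
/-- The monotone operator whose least fixpoint is the grounded "in" set. -/
def GdF {S : Type*} (R : S → S → Prop) : Set S →o Set S :=
  ⟨fun T => {x | ∀ z, R z x → ∃ y ∈ T, R y z},
   fun T T' hTT' x hx z hzx => by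
     obtain ⟨y, hy, hyz⟩ := hx z hzx
     exact ⟨y, hTT' hy, hyz⟩⟩

/-- The grounded "in" set. -/
def Gd {S : Type*} (R : S → S → Prop) : Set S := OrderHom.lfp (GdF R)

lemma gd_fix {S : Type*} (R : S → S → Prop) : GdF R (Gd R) = Gd R :=
  OrderHom.map_lfp (GdF R)

lemma gd_iff {S : Type*} (R : S → S → Prop) (x : S) :
    x ∈ Gd R ↔ ∀ z, R z x → ∃ y ∈ Gd R, R y z := by
  conv_lhs => rw [← gd_fix R]
  rfl

lemma gd_cf {S : Type*} (R : S → S → Prop) :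
    ∀ x ∈ Gd R, ∀ z, R z x → z ∉ Gd R := by
  set C : Set S := {x | ∀ z, R z x → z ∉ Gd R} with hC
  have key : Gd R ≤ Gd R ∩ C := by
    apply OrderHom.lfp_le
    intro x hx
    constructor
    · rw [gd_iff]
      intro z hzx
      obtain ⟨y, hy, hyz⟩ := hx z hzx
      exact ⟨y, hy.1, hyz⟩
    · intro z hzx hz
      obtain ⟨y, ⟨hyG, hyC⟩, hyz⟩ := hx z hzx
      obtain ⟨y', hy', hy'y⟩ := (gd_iff R z).mp hz y hyz
      exact hyC y' hy'y hy'
  exact fun x hx => (key hx).2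

/-- Consistency of `Δ_A`: every argumentation framework has a CN-model of its theory. -/
theorem delta_consistent
    {S : Type*} [Fintype S] [Nonempty S] (R : S → S → Prop) :
    ∃ h hN : S → Bool, IsCNValuation h hN ∧ IsModelDelta R h hN := by
  classical
  refine ⟨fun x => decide (x ∈ Gd R), fun x => decide (∃ y, R y x ∧ y ∈ Gd R), ?_, ?_, ?_, ?_, ?_⟩
  · intro x hx
    simp only [decide_eq_true_eq] at hx
    obtain ⟨y, hyx, hy⟩ := hx
    simp only [decide_eq_false_iff_not]
    exact fun hgx => gd_cf R x hgx y hyx hy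
  · intro x hx
    simp only [decide_eq_true_eq]
    rw [gd_iff]
    exact fun z hz => absurd hz (hx z)
  · intro x
    simp only [decide_eq_true_eq]
    rw [gd_iff]
    constructor
    · rintro h z hzx
      obtain ⟨y, hy, hyz⟩ := h z hzx
      exact ⟨y, hyz, hy⟩
    · intro h z hzx
      obtain ⟨y, hyz, hy⟩ := h z hzx
      exact ⟨y, hy, hyz⟩
  · intro z x hzx hz
    simp only [decide_eq_true_eq] at *
    exact ⟨z, hzx, hz⟩
  · intro x h1 h2
    simp only [decide_eq_true_eq, decide_eq_false_iff_not] at *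
    obtain ⟨z, hzx, hz⟩ := h2
    constructor
    · intro hx
      obtain ⟨y, hy, hyz⟩ := (gd_iff R x).mp hx z hzx
      exact hz ⟨y, hyz, hy⟩
    · rintro ⟨z', hz'x, hz'⟩
      exact h1 z' hz'x hz'
end

section
/- Grounded extension theorem: Let (S,R) be an argumentation framework and let E = {x ∈ S | h x = true for every CN-valuation (h,hN) that is a model of Δ_A} (by completeness, this is the set of arguments x with Δ_A ⊢_CN x). Then E is the grounded extension of (S,R): there is a legitimate Caminada labelling λ with {x | λ(x) = in} = E, and for every legitimate Caminada labelling μ of (S,R) one has E ⊆ {x | μ(x) = in}. -/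
/-- The defense operator: `x ∈ Fop R A` iff every attacker of `x` is attacked by `A`. -/
def Fop {S : Type*} (R : S → S → Prop) (A : Set S) : Set S :=
  {x | ∀ z, R z x → ∃ y ∈ A, R y z}

lemma Fop_mono {S : Type*} (R : S → S → Prop) {A B : Set S} (hAB : A ⊆ B) :
    Fop R A ⊆ Fop R B := by
  intro x hx z hz
  obtain ⟨y, hy, hyz⟩ := hx z hz
  exact ⟨y, hAB hy, hyz⟩

/-- The approximation chain of the grounded extension. -/
def Kchain {S : Type*} (R : S → S → Prop) : ℕ → Set S
  | 0 => ∅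
  | n + 1 => Fop R (Kchain R n)

/-- The grounded extension. -/
def Gr {S : Type*} (R : S → S → Prop) : Set S := ⋃ n, Kchain R n

lemma Kchain_succ_mono {S : Type*} (R : S → S → Prop) :
    ∀ n, Kchain R n ⊆ Kchain R (n + 1) := by
  intro n
  induction n with
  | zero => simp [Kchain]
  | succ n ih => exact Fop_mono R ih

lemma Kchain_mono {S : Type*} (R : S → S → Prop) {m n : ℕ} (h : m ≤ n) :
    Kchain R m ⊆ Kchain R n := by
  induction h with
  | refl => exact subset_rfl
  | step _ ih => exact ih.trans (Kchain_succ_mono R _)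

lemma Kchain_subset_Gr {S : Type*} (R : S → S → Prop) (n : ℕ) :
    Kchain R n ⊆ Gr R := Set.subset_iUnion (Kchain R) n

lemma Gr_prefixed {S : Type*} [Fintype S] (R : S → S → Prop) :
    Fop R (Gr R) ⊆ Gr R := by
  classical
  intro x hx
  have hch : ∀ z : S, ∃ n : ℕ, R z x → ∃ y ∈ Kchain R n, R y z := by
    intro z
    by_cases hz : R z x
    · obtain ⟨y, hy, hyz⟩ := hx z hz
      obtain ⟨n, hn⟩ := Set.mem_iUnion.1 hy
      exact ⟨n, fun _ => ⟨y, hn, hyz⟩⟩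
    · exact ⟨0, fun h => absurd h hz⟩
  choose f hf using hch
  refine Set.mem_iUnion.2 ⟨Finset.univ.sup f + 1, ?_⟩
  intro z hz
  obtain ⟨y, hy, hyz⟩ := hf z hz
  exact ⟨y, Kchain_mono R (Finset.le_sup (Finset.mem_univ z)) hy, hyz⟩

lemma Gr_subset_Fop {S : Type*} (R : S → S → Prop) :
    Gr R ⊆ Fop R (Gr R) := by
  intro x hx
  obtain ⟨n, hn⟩ := Set.mem_iUnion.1 hx
  match n, hn with
  | 0, hn => exact absurd hn (Set.notMem_empty x)
  | n + 1, hn => exact Fop_mono R (Kchain_subset_Gr R n) hn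

/-- `Gr R` is a fixed point membership criterion. -/
lemma Gr_mem_iff {S : Type*} [Fintype S] (R : S → S → Prop) (x : S) :
    x ∈ Gr R ↔ ∀ z, R z x → ∃ y ∈ Gr R, R y z :=
  ⟨fun h => Gr_subset_Fop R h, fun h => Gr_prefixed R h⟩

lemma Gr_least {S : Type*} (R : S → S → Prop) {A : Set S}
    (hA : Fop R A ⊆ A) : Gr R ⊆ A := by
  have : ∀ n, Kchain R n ⊆ A := by
    intro n
    induction n with
    | zero => simp [Kchain]
    | succ n ih => exact (Fop_mono R ih).trans hA
  exact Set.iUnion_subset this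

/-- Conflict-freeness of the grounded extension. -/
lemma Gr_conflict_free {S : Type*} (R : S → S → Prop) :
    ∀ n, ∀ x ∈ Kchain R n, ∀ y ∈ Gr R, ¬ R y x := by
  intro n
  induction n with
  | zero => intro x hx; exact absurd hx (Set.notMem_empty x)
  | succ n ih =>
    intro x hx y hy hyx
    obtain ⟨w, hw, hwy⟩ := hx y hyx
    obtain ⟨v, hv, hvw⟩ := Gr_subset_Fop R hy w hwy
    exact ih w hw v hv hvw

lemma Gr_conflict_free' {S : Type*} (R : S → S → Prop) :
    ∀ x ∈ Gr R, ∀ y ∈ Gr R, ¬ R y x := by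
  intro x hx y hy
  obtain ⟨n, hn⟩ := Set.mem_iUnion.1 hx
  exact Gr_conflict_free R n x hn y hy

/-- Grounded extension theorem: the set of arguments true in all models of `Δ_A`
is the grounded (smallest complete) extension. -/
theorem grounded_extension
    {S : Type*} [Fintype S] [Nonempty S] (R : S → S → Prop)
    (E : Set S)
    (hE : E = {x | ∀ h hN : S → Bool,
      IsCNValuation h hN → IsModelDelta R h hN → h x = true}) :
    (∃ lam : S → Lab, Legitimate R lam ∧ {x | lam x = Lab.inn} = E) ∧
    (∀ mu : S → Lab, Legitimate R mu → E ⊆ {x | mu x = Lab.inn}) := by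
  classical
  -- Every model of Δ_A contains Gr R among its true arguments.
  have hmodelsub : ∀ h hN : S → Bool, IsCNValuation h hN → IsModelDelta R h hN →
      Gr R ⊆ {x | h x = true} := by
    intro h hN _ hM
    apply Gr_least
    intro x hx
    refine (hM.2.1 x).2 ?_
    intro z hz
    obtain ⟨y, hy, hyz⟩ := hx z hz
    exact hM.2.2.1 y z hyz hy
  -- The canonical (minimal) model.
  set h₀ : S → Bool := fun x => if x ∈ Gr R then true else false with hh₀def
  set hN₀ : S → Bool := fun x => if ∃ y ∈ Gr R, R y x then true else false with hhN₀def
  have hh₀ : ∀ x, h₀ x = true ↔ x ∈ Gr R := by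
    intro x; simp [hh₀def]
  have hhN₀ : ∀ x, hN₀ x = true ↔ ∃ y ∈ Gr R, R y x := by
    intro x; simp [hhN₀def]
  have hh₀f : ∀ x, h₀ x = false ↔ x ∉ Gr R := by
    intro x
    rw [← Bool.not_eq_true, hh₀ x]
  have hhN₀f : ∀ x, hN₀ x = false ↔ ¬ ∃ y ∈ Gr R, R y x := by
    intro x
    rw [← Bool.not_eq_true, hhN₀ x]
  have hCN : IsCNValuation h₀ hN₀ := by
    intro x hx
    obtain ⟨y, hy, hyx⟩ := (hhN₀ x).1 hx
    refine (hh₀f x).2 fun hxG => ?_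
    exact Gr_conflict_free' R x hxG y hy hyx
  have hModel : IsModelDelta R h₀ hN₀ := by
    refine ⟨?_, ?_, ?_, ?_⟩
    · intro x hx
      refine (hh₀ x).2 ((Gr_mem_iff R x).2 ?_)
      intro z hz; exact absurd hz (hx z)
    · intro x
      rw [hh₀ x, Gr_mem_iff R x]
      constructor
      · intro hx z hz
        exact (hhN₀ z).2 (hx z hz)
      · intro hx z hz
        exact (hhN₀ z).1 (hx z hz)
    · intro z x hzx hz
      exact (hhN₀ x).2 ⟨z, (hh₀ z).1 hz, hzx⟩
    · intro x hall ⟨z, hzx, hzN⟩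
      constructor
      · refine (hh₀f x).2 fun hxG => ?_
        obtain ⟨y, hy, hyz⟩ := (Gr_mem_iff R x).1 hxG z hzx
        exact absurd ((hhN₀ z).2 ⟨y, hy, hyz⟩) (by simp [hzN])
      · refine (hhN₀f x).2 fun ⟨y, hy, hyx⟩ => ?_
        have := (hh₀f y).1 (hall y hyx)
        exact this hy
  -- E = Gr R.
  have hEG : E = Gr R := by
    apply Set.eq_of_subset_of_subset
    · intro x hx
      rw [hE] at hx
      exact (hh₀ x).1 (hx h₀ hN₀ hCN hModel)
    · intro x hx
      rw [hE]
      intro h hN hcn hm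
      exact hmodelsub h hN hcn hm hx
  -- The grounded labelling.
  set lam : S → Lab := fun x =>
    if x ∈ Gr R then Lab.inn else if ∃ y ∈ Gr R, R y x then Lab.out else Lab.und
    with hlamdef
  have lam_inn : ∀ x, lam x = Lab.inn ↔ x ∈ Gr R := by
    intro x
    simp only [hlamdef]
    by_cases hx : x ∈ Gr R
    · simp [hx]
    · by_cases hx' : ∃ y ∈ Gr R, R y x <;> simp [hx, hx']
  have lam_out : ∀ x, lam x = Lab.out ↔ (x ∉ Gr R ∧ ∃ y ∈ Gr R, R y x) := by
    intro x
    simp only [hlamdef]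
    by_cases hx : x ∈ Gr R
    · simp [hx]
    · by_cases hx' : ∃ y ∈ Gr R, R y x <;> simp [hx, hx']
  have lam_und : ∀ x, lam x = Lab.und ↔ (x ∉ Gr R ∧ ¬ ∃ y ∈ Gr R, R y x) := by
    intro x
    simp only [hlamdef]
    by_cases hx : x ∈ Gr R
    · simp [hx]
    · by_cases hx' : ∃ y ∈ Gr R, R y x <;> simp [hx, hx']
  have hLegit : Legitimate R lam := by
    intro x
    refine ⟨?_, ?_, ?_⟩
    · -- inn condition
      rw [lam_inn x, Gr_mem_iff R x]
      constructor
      · intro hx z hz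
        refine (lam_out z).2 ⟨fun hzG => ?_, hx z hz⟩
        obtain ⟨y, hy, hyz⟩ := hx z hz
        exact Gr_conflict_free' R z hzG y hy hyz
      · intro hx z hz
        exact ((lam_out z).1 (hx z hz)).2
    · -- out condition
      rw [lam_out x]
      constructor
      · rintro ⟨-, y, hy, hyx⟩
        exact ⟨y, hyx, (lam_inn y).2 hy⟩
      · rintro ⟨z, hzx, hz⟩
        have hzG := (lam_inn z).1 hz
        refine ⟨fun hxG => Gr_conflict_free' R x hxG z hzG hzx, z, hzG, hzx⟩
    · -- und condition
      rw [lam_und x]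
      constructor
      · rintro ⟨hxG, hxA⟩
        constructor
        · intro z hz hzin
          exact hxA ⟨z, (lam_inn z).1 hzin, hz⟩
        · have : ¬ ∀ z, R z x → ∃ y ∈ Gr R, R y z := fun h => hxG ((Gr_mem_iff R x).2 h)
          push_neg at this
          obtain ⟨z, hzx, hz⟩ := this
          refine ⟨z, hzx, (lam_und z).2 ⟨fun hzG => hxA ⟨z, hzG, hzx⟩, ?_⟩⟩
          intro ⟨y, hy, hyz⟩
          exact hz y hy hyz
      · rintro ⟨hnoin, z, hzx, hzund⟩
        have hzprops := (lam_und z).1 hzund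
        constructor
        · intro hxG
          obtain ⟨y, hy, hyz⟩ := (Gr_mem_iff R x).1 hxG z hzx
          exact hzprops.2 ⟨y, hy, hyz⟩
        · rintro ⟨y, hy, hyx⟩
          exact hnoin y hyx ((lam_inn y).2 hy)
  refine ⟨⟨lam, hLegit, ?_⟩, ?_⟩
  · rw [hEG]
    ext x
    exact lam_inn x
  · intro mu hmu
    rw [hEG]
    apply Gr_least
    intro x hx
    have : ∀ z, R z x → mu z = Lab.out := by
      intro z hz
      obtain ⟨y, hy, hyz⟩ := hx z hz
      exact ((hmu z).2.1).2 ⟨y, hyz, hy⟩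
    exact ((hmu x).1).2 this
end

section
/- Characterisation of stable extensions: Let (S,R) be an argumentation framework. Call a legitimate Caminada labelling λ stable if λ(x) ≠ und for every x ∈ S. Then the models of Δ_A that additionally satisfy the Stable axiom (h x = true or hN x = true, for every x ∈ S) correspond exactly to the stable labellings: if (h,hN) is such a model then the induced labelling λ_h (λ_h(x) = in if h x = true, out if hN x = true, und otherwise) is a stable legitimate labelling, and conversely for every stable legitimate labelling λ the induced valuation (h_λ, hN_λ) (h_λ x = true iff λ(x)=in, hN_λ x = true iff λ(x)=out) is a model of Δ_A satisfying the Stable axiom. -/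
/-- Characterisation of stable extensions: models of `Δ_A` satisfying the Stable
axiom correspond exactly to the stable legitimate labellings. -/
theorem stable_characterisation
    {S : Type*} [Fintype S] [Nonempty S] (R : S → S → Prop) :
    (∀ h hN : S → Bool, IsCNValuation h hN → IsModelDelta R h hN →
      (∀ x, h x = true ∨ hN x = true) →
      Legitimate R (fun x =>
        if h x = true then Lab.inn else if hN x = true then Lab.out else Lab.und) ∧
      (∀ x : S, (if h x = true then Lab.inn
        else if hN x = true then Lab.out else Lab.und) ≠ Lab.und)) ∧
    (∀ lam : S → Lab, Legitimate R lam → (∀ x, lam x ≠ Lab.und) →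
      IsCNValuation (fun x => decide (lam x = Lab.inn)) (fun x => decide (lam x = Lab.out)) ∧
      IsModelDelta R (fun x => decide (lam x = Lab.inn)) (fun x => decide (lam x = Lab.out)) ∧
      (∀ x : S, decide (lam x = Lab.inn) = true ∨ decide (lam x = Lab.out) = true)) := by
  constructor
  · rintro h hN hcn ⟨_m1, m2, m3, _m4⟩ hst
    set lam : S → Lab := fun x =>
      if h x = true then Lab.inn else if hN x = true then Lab.out else Lab.und with hlam
    have hund : ∀ x, lam x ≠ Lab.und := by
      intro x
      simp only [hlam]
      rcases hst x with hx | hx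
      · simp [hx]
      · by_cases h2 : h x = true <;> simp [hx, h2]
    have hinn : ∀ x, lam x = Lab.inn ↔ h x = true := by
      intro x
      simp only [hlam]
      by_cases hx : h x = true
      · simp [hx]
      · rcases hst x with h1 | h1
        · exact absurd h1 hx
        · simp [hx, h1]
    have hout : ∀ x, lam x = Lab.out ↔ hN x = true := by
      intro x
      simp only [hlam]
      by_cases hx : h x = true
      · have := hcn x
        constructor
        · simp [hx]
        · intro hn; rw [this hn] at hx; simp at hx
      · rcases hst x with h1 | h1
        · exact absurd h1 hx
        · simp [hx, h1]
    refine ⟨fun x => ⟨?_, ?_, ?_⟩, hund⟩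
    · rw [hinn x, m2 x]
      constructor
      · intro hz z hzx; rw [hout z]; exact hz z hzx
      · intro hz z hzx; rw [← hout z]; exact hz z hzx
    · rw [hout x]
      constructor
      · intro hnx
        have hx : h x = false := hcn x hnx
        have : ¬ ∀ z, R z x → hN z = true := by
          intro hc; rw [← m2 x] at hc; rw [hx] at hc; simp at hc
        push_neg at this
        obtain ⟨z, hzx, hz⟩ := this
        refine ⟨z, hzx, ?_⟩
        rw [hinn z]
        rcases hst z with h1 | h1
        · exact h1
        · exact absurd h1 (by simp [hz])
      · rintro ⟨z, hzx, hz⟩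
        exact m3 z x hzx ((hinn z).mp hz)
    · constructor
      · intro hx; exact absurd hx (hund x)
      · rintro ⟨_, z, hzx, hz⟩; exact absurd hz (hund z)
  · intro lam hleg hst
    have hio : ∀ x, lam x = Lab.inn ∨ lam x = Lab.out := by
      intro x
      cases hx : lam x
      · left; rfl
      · right; rfl
      · exact absurd hx (hst x)
    have hcn : IsCNValuation (fun x => decide (lam x = Lab.inn))
        (fun x => decide (lam x = Lab.out)) := by
      intro x hx
      simp only [decide_eq_true_eq] at hx ⊢
      simp [hx]
    refine ⟨hcn, ⟨?_, ?_, ?_, ?_⟩, ?_⟩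
    · intro x hx
      simp only [decide_eq_true_eq]
      exact ((hleg x).1).mpr (fun z hz => absurd hz (hx z))
    · intro x
      simp only [decide_eq_true_eq]
      exact (hleg x).1
    · intro z x hzx hz
      simp only [decide_eq_true_eq] at hz ⊢
      exact ((hleg x).2.1).mpr ⟨z, hzx, hz⟩
    · intro x h1 h2
      obtain ⟨z, hzx, hz⟩ := h2
      simp only [decide_eq_false_iff_not] at h1 hz
      rcases hio z with hl | hl
      · exact absurd hl (h1 z hzx)
      · exact absurd hl hz
    · intro x
      simp only [decide_eq_true_eq]
      exact hio x
end

section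
/- Strong completeness of the logic CN: for every set Δ of CN-formulas and every CN-formula A, Δ ⊢_CN A if and only if every CN-model h with h ⊨ Δ satisfies h ⊨ A. -/
/-- Formulas of the logic CN: atoms `q`, strongly negated atoms `Nq`
(the unary symbol `N` applies to atoms only and is not iterated),
`⊤`, `⊥`, and the classical connectives. Atoms are indexed by `ℕ`
(a countably infinite set of atoms). -/
inductive CNForm
  | atom : ℕ → CNForm
  | natom : ℕ → CNForm
  | top : CNForm
  | bot : CNForm
  | neg : CNForm → CNForm
  | and : CNForm → CNForm → CNForm
  | or : CNForm → CNForm → CNForm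
  | imp : CNForm → CNForm → CNForm

/-- Classical Boolean evaluation of a CN-formula, where the atoms `q` get values
from `v` and the atoms `Nq` get values from `vN` (treated as independent atoms). -/
def CNForm.eval (v vN : ℕ → Bool) : CNForm → Bool
  | atom q => v q
  | natom q => vN q
  | top => true
  | bot => false
  | neg A => !(A.eval v vN)
  | and A B => (A.eval v vN) && (B.eval v vN)
  | or A B => (A.eval v vN) || (B.eval v vN)
  | imp A B => !(A.eval v vN) || (B.eval v vN)

/-- A classical tautology over the atomic formulas `q`, `Nq`. -/
def CNTautology (A : CNForm) : Prop := ∀ v vN : ℕ → Bool, A.eval v vN = true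

/-- The non-logical theory `Θ_n = {Nq → ¬q : q an atom}`. -/
def ThetaN : Set CNForm :=
  {A | ∃ q : ℕ, A = CNForm.imp (CNForm.natom q) (CNForm.neg (CNForm.atom q))}

/-- Classical provability `Δ ⊢_C A`: derivability from `Δ` together with all
tautologies using modus ponens. -/
inductive ProvC (Δ : Set CNForm) : CNForm → Prop
  | hyp {A : CNForm} : A ∈ Δ → ProvC Δ A
  | taut {A : CNForm} : CNTautology A → ProvC Δ A
  | mp {A B : CNForm} : ProvC Δ (CNForm.imp A B) → ProvC Δ A → ProvC Δ B

/-- CN-provability: `Δ ⊢_CN A` iff `Δ ∪ Θ_n ⊢_C A`. -/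
def ProvCN (Δ : Set CNForm) (A : CNForm) : Prop := ProvC (Δ ∪ ThetaN) A



section Aux
open CNForm
open scoped Classical

/-- Monotonicity of classical provability. -/
lemma ProvC.mono {Γ Γ' : Set CNForm} (h : Γ ⊆ Γ') {A : CNForm} (hA : ProvC Γ A) :
    ProvC Γ' A := by
  induction hA with
  | hyp hmem => exact ProvC.hyp (h hmem)
  | taut ht => exact ProvC.taut ht
  | mp _ _ ih1 ih2 => exact ProvC.mp ih1 ih2

/-- Finite character of provability. -/
lemma ProvC.finite {Γ : Set CNForm} {A : CNForm} (hA : ProvC Γ A) :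
    ∃ S : Finset CNForm, ↑S ⊆ Γ ∧ ProvC (↑S : Set CNForm) A := by
  induction hA with
  | @hyp A hmem =>
      exact ⟨{A}, by simpa using hmem, ProvC.hyp (by simp)⟩
  | taut ht => exact ⟨∅, by simp, ProvC.taut ht⟩
  | mp _ _ ih1 ih2 =>
      obtain ⟨S1, hS1, h1⟩ := ih1
      obtain ⟨S2, hS2, h2⟩ := ih2
      classical
      refine ⟨S1 ∪ S2, ?_, ProvC.mp (h1.mono ?_) (h2.mono ?_)⟩ <;>
        simp only [Finset.coe_union]
      · exact Set.union_subset hS1 hS2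
      · exact Set.subset_union_left
      · exact Set.subset_union_right

-- Tautology schemes
lemma tautK (A B : CNForm) : CNTautology (A.imp (B.imp A)) := by
  intro v vN; cases hA : A.eval v vN <;> cases hB : B.eval v vN <;> simp [CNForm.eval, hA, hB]

lemma tautS (A B C : CNForm) :
    CNTautology ((A.imp (B.imp C)).imp ((A.imp B).imp (A.imp C))) := by
  intro v vN
  cases hA : A.eval v vN <;> cases hB : B.eval v vN <;> cases hC : C.eval v vN <;>
    simp [CNForm.eval, hA, hB, hC]

lemma tautI (A : CNForm) : CNTautology (A.imp A) := by
  intro v vN; cases hA : A.eval v vN <;> simp [CNForm.eval, hA]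

lemma tautNegIntro (A : CNForm) : CNTautology ((A.imp CNForm.bot).imp A.neg) := by
  intro v vN; cases hA : A.eval v vN <;> simp [CNForm.eval, hA]

lemma tautExplode (A : CNForm) : CNTautology (A.imp (A.neg.imp CNForm.bot)) := by
  intro v vN; cases hA : A.eval v vN <;> simp [CNForm.eval, hA]

lemma tautNegImp (A B : CNForm) : CNTautology (A.neg.imp (A.imp B)) := by
  intro v vN; cases hA : A.eval v vN <;> cases hB : B.eval v vN <;> simp [CNForm.eval, hA, hB]

lemma tautAndIntro (A B : CNForm) : CNTautology (A.imp (B.imp (A.and B))) := by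
  intro v vN; cases hA : A.eval v vN <;> cases hB : B.eval v vN <;> simp [CNForm.eval, hA, hB]

lemma tautAndLeft (A B : CNForm) : CNTautology ((A.and B).imp A) := by
  intro v vN; cases hA : A.eval v vN <;> cases hB : B.eval v vN <;> simp [CNForm.eval, hA, hB]

lemma tautAndRight (A B : CNForm) : CNTautology ((A.and B).imp B) := by
  intro v vN; cases hA : A.eval v vN <;> cases hB : B.eval v vN <;> simp [CNForm.eval, hA, hB]

lemma tautOrInl (A B : CNForm) : CNTautology (A.imp (A.or B)) := by
  intro v vN; cases hA : A.eval v vN <;> cases hB : B.eval v vN <;> simp [CNForm.eval, hA, hB]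

lemma tautOrInr (A B : CNForm) : CNTautology (B.imp (A.or B)) := by
  intro v vN; cases hA : A.eval v vN <;> cases hB : B.eval v vN <;> simp [CNForm.eval, hA, hB]

lemma tautOrElim (A B : CNForm) :
    CNTautology (A.neg.imp (B.neg.imp ((A.or B).imp CNForm.bot))) := by
  intro v vN; cases hA : A.eval v vN <;> cases hB : B.eval v vN <;> simp [CNForm.eval, hA, hB]

lemma tautTop : CNTautology CNForm.top := by intro v vN; simp [CNForm.eval]

/-- Deduction theorem. -/
lemma deduction {Γ : Set CNForm} {B A : CNForm} (h : ProvC (Γ ∪ {B}) A) :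
    ProvC Γ (B.imp A) := by
  induction h with
  | @hyp A hmem =>
      rcases hmem with hm | hm
      · exact ProvC.mp (ProvC.taut (tautK A B)) (ProvC.hyp hm)
      · rcases hm with rfl
        exact ProvC.taut (tautI A)
  | @taut A ht =>
      exact ProvC.mp (ProvC.taut (tautK A B)) (ProvC.taut ht)
  | @mp A C _ _ ih1 ih2 =>
      exact ProvC.mp (ProvC.mp (ProvC.taut (tautS B A C)) ih1) ih2

/-- Consistency. -/
def ConCN (Γ : Set CNForm) : Prop := ¬ ProvC Γ CNForm.bot

/-- A finite subset of the union of a nonempty chain lies in some member. -/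
lemma finset_subset_chain {c : Set (Set CNForm)} (hc : IsChain (· ⊆ ·) c)
    (hne : c.Nonempty) (S : Finset CNForm) (hS : ↑S ⊆ ⋃₀ c) :
    ∃ m ∈ c, ↑S ⊆ m := by
  classical
  induction S using Finset.induction with
  | empty => exact ⟨hne.choose, hne.choose_spec, by simp⟩
  | @insert a S ha ih =>
      have hsub : ↑S ⊆ ⋃₀ c := by
        intro x hx; exact hS (by simp [hx])
      obtain ⟨m, hm, hSm⟩ := ih hsub
      have haU : a ∈ ⋃₀ c := hS (by simp)
      obtain ⟨m', hm', ham'⟩ := haU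
      rcases hc.total hm hm' with h | h
      · exact ⟨m', hm', by
          intro x hx
          simp only [Finset.coe_insert, Set.mem_insert_iff] at hx
          rcases hx with rfl | hx
          · exact ham'
          · exact h (hSm hx)⟩
      · exact ⟨m, hm, by
          intro x hx
          simp only [Finset.coe_insert, Set.mem_insert_iff] at hx
          rcases hx with rfl | hx
          · exact h ham'
          · exact hSm hx⟩

/-- Lindenbaum: every consistent set extends to a maximal consistent set. -/
lemma lindenbaum {Γ : Set CNForm} (hΓ : ConCN Γ) :
    ∃ M, Γ ⊆ M ∧ ConCN M ∧ ∀ A, A ∉ M → ¬ ConCN (M ∪ {A}) := by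
  have H : ∀ c ⊆ {Γ' | ConCN Γ'}, IsChain (· ⊆ ·) c → c.Nonempty →
      ∃ ub ∈ {Γ' | ConCN Γ'}, ∀ s ∈ c, s ⊆ ub := by
    intro c hc hchain hne
    refine ⟨⋃₀ c, ?_, fun s hs => Set.subset_sUnion_of_mem hs⟩
    intro hbad
    obtain ⟨S, hSsub, hSprov⟩ := ProvC.finite hbad
    obtain ⟨m, hm, hSm⟩ := finset_subset_chain hchain hne S hSsub
    exact (hc hm) (hSprov.mono hSm)
  obtain ⟨M, hM⟩ := zorn_subset_nonempty {Γ' | ConCN Γ'} H Γ hΓ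
  refine ⟨M, hM.1, hM.2.prop, ?_⟩
  intro A hA hcon
  have : M ∪ {A} = M := hM.2.eq_of_ge hcon Set.subset_union_left
  have hmem : A ∈ M ∪ {A} := Set.mem_union_right _ rfl
  rw [this] at hmem
  exact hA hmem

section MCS

variable {M : Set CNForm} (hcon : ConCN M) (hclosed : ∀ A, A ∉ M → ¬ ConCN (M ∪ {A}))

include hcon hclosed

lemma mcs_of_prov {A : CNForm} (h : ProvC M A) : A ∈ M := by
  by_contra hA
  have h2 : ProvC (M ∪ {A}) CNForm.bot := not_not.mp (hclosed A hA)
  have h3 : ProvC M (A.imp CNForm.bot) := deduction h2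
  exact hcon (ProvC.mp h3 h)

lemma mcs_neg_of_not_mem {A : CNForm} (hA : A ∉ M) : A.neg ∈ M := by
  have h2 : ProvC (M ∪ {A}) CNForm.bot := not_not.mp (hclosed A hA)
  exact mcs_of_prov hcon hclosed
    (ProvC.mp (ProvC.taut (tautNegIntro A)) (deduction h2))

lemma mcs_not_mem_of_neg {A : CNForm} (hA : A.neg ∈ M) : A ∉ M := by
  intro hA'
  exact hcon (ProvC.mp (ProvC.mp (ProvC.taut (tautExplode A)) (ProvC.hyp hA')) (ProvC.hyp hA))

/-- The truth lemma. -/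
lemma truth_lemma :
    ∀ A : CNForm,
      A.eval (fun q => decide (CNForm.atom q ∈ M)) (fun q => decide (CNForm.natom q ∈ M)) = true
        ↔ A ∈ M := by
  intro A
  induction A with
  | atom q => simp [CNForm.eval]
  | natom q => simp [CNForm.eval]
  | top => simpa [CNForm.eval] using mcs_of_prov hcon hclosed (ProvC.taut tautTop)
  | bot =>
      simp only [CNForm.eval]
      exact iff_of_false (by simp) (fun h => hcon (ProvC.hyp h))
  | neg A ih =>
      simp only [CNForm.eval, Bool.not_eq_true']
      rw [← Bool.not_eq_true, ih]
      constructor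
      · exact mcs_neg_of_not_mem hcon hclosed
      · exact mcs_not_mem_of_neg hcon hclosed
  | and A B ihA ihB =>
      simp only [CNForm.eval, Bool.and_eq_true, ihA, ihB]
      constructor
      · rintro ⟨hA, hB⟩
        exact mcs_of_prov hcon hclosed
          (ProvC.mp (ProvC.mp (ProvC.taut (tautAndIntro A B)) (ProvC.hyp hA)) (ProvC.hyp hB))
      · intro h
        exact ⟨mcs_of_prov hcon hclosed (ProvC.mp (ProvC.taut (tautAndLeft A B)) (ProvC.hyp h)),
               mcs_of_prov hcon hclosed (ProvC.mp (ProvC.taut (tautAndRight A B)) (ProvC.hyp h))⟩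
  | or A B ihA ihB =>
      simp only [CNForm.eval, Bool.or_eq_true, ihA, ihB]
      constructor
      · rintro (hA | hB)
        · exact mcs_of_prov hcon hclosed (ProvC.mp (ProvC.taut (tautOrInl A B)) (ProvC.hyp hA))
        · exact mcs_of_prov hcon hclosed (ProvC.mp (ProvC.taut (tautOrInr A B)) (ProvC.hyp hB))
      · intro h
        by_contra hcontra
        push_neg at hcontra
        obtain ⟨hA, hB⟩ := hcontra
        have hnA := mcs_neg_of_not_mem hcon hclosed hA
        have hnB := mcs_neg_of_not_mem hcon hclosed hB
        exact hcon (ProvC.mp (ProvC.mp (ProvC.mp (ProvC.taut (tautOrElim A B))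
          (ProvC.hyp hnA)) (ProvC.hyp hnB)) (ProvC.hyp h))
  | imp A B ihA ihB =>
      simp only [CNForm.eval, Bool.or_eq_true, Bool.not_eq_true', ← Bool.not_eq_true, ihA, ihB]
      constructor
      · rintro (hA | hB)
        · exact mcs_of_prov hcon hclosed
            (ProvC.mp (ProvC.taut (tautNegImp A B))
              (ProvC.hyp (mcs_neg_of_not_mem hcon hclosed hA)))
        · exact mcs_of_prov hcon hclosed (ProvC.mp (ProvC.taut (tautK B A)) (ProvC.hyp hB))
      · intro h
        by_cases hA : A ∈ M
        · exact Or.inr (mcs_of_prov hcon hclosed (ProvC.mp (ProvC.hyp h) (ProvC.hyp hA)))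
        · exact Or.inl hA

end MCS

/-- Soundness of classical provability. -/
lemma soundness {Γ : Set CNForm} {A : CNForm} (h : ProvC Γ A) (v vN : ℕ → Bool)
    (hΓ : ∀ B ∈ Γ, B.eval v vN = true) : A.eval v vN = true := by
  induction h with
  | hyp hmem => exact hΓ _ hmem
  | taut ht => exact ht v vN
  | @mp A B _ _ ih1 ih2 =>
      have := ih1
      simp only [CNForm.eval, ih2, Bool.not_true, Bool.false_or] at this
      exact this

end Aux


/-- Strong completeness of CN: `Δ ⊢_CN A` iff every CN-model of `Δ`
(a Boolean assignment with `vN q = true → v q = false`) satisfies `A`. -/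
theorem CN_strong_completeness (Δ : Set CNForm) (A : CNForm) :
    ProvCN Δ A ↔
      ∀ v vN : ℕ → Bool, (∀ q, vN q = true → v q = false) →
        (∀ B ∈ Δ, B.eval v vN = true) → A.eval v vN = true := by
  constructor
  · intro h v vN hcn hΔ
    refine soundness h v vN ?_
    intro B hB
    rcases hB with hB | hB
    · exact hΔ B hB
    · obtain ⟨q, rfl⟩ := hB
      simp only [CNForm.eval]
      cases hq : vN q
      · simp
      · simp [hcn q hq]
  · intro h
    classical
    by_contra hprov
    have hcon : ConCN ((Δ ∪ ThetaN) ∪ {A.neg}) := by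
      intro hbad
      apply hprov
      have hd : ProvC (Δ ∪ ThetaN) (A.neg.imp CNForm.bot) := deduction hbad
      -- ¬A → ⊥ yields A by tautology ((¬A → ⊥) → A)
      have htaut : CNTautology ((A.neg.imp CNForm.bot).imp A) := by
        intro v vN; cases hA : A.eval v vN <;> simp [CNForm.eval, hA]
      exact ProvC.mp (ProvC.taut htaut) hd
    obtain ⟨M, hsub, hMcon, hMmax⟩ := lindenbaum hcon
    set v : ℕ → Bool := fun q => decide (CNForm.atom q ∈ M) with hv
    set vN : ℕ → Bool := fun q => decide (CNForm.natom q ∈ M) with hvN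
    have htl := truth_lemma hMcon hMmax
    have hcn : ∀ q, vN q = true → v q = false := by
      intro q hq
      simp only [hvN, decide_eq_true_eq] at hq
      have himpM : (CNForm.natom q).imp ((CNForm.atom q).neg) ∈ M :=
        hsub (Set.mem_union_left _ (Set.mem_union_right _ ⟨q, rfl⟩))
      have hnegM : (CNForm.atom q).neg ∈ M :=
        mcs_of_prov hMcon hMmax (ProvC.mp (ProvC.hyp himpM) (ProvC.hyp hq))
      have := mcs_not_mem_of_neg hMcon hMmax hnegM
      simp [hv, this]
    have hΔ : ∀ B ∈ Δ, B.eval v vN = true := by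
      intro B hB
      exact (htl B).mpr (hsub (Set.mem_union_left _ (Set.mem_union_left _ hB)))
    have hAtrue : A.eval v vN = true := h v vN hcn hΔ
    have hAneg : A.neg ∈ M := hsub (Set.mem_union_right _ rfl)
    have : A ∉ M := mcs_not_mem_of_neg hMcon hMmax hAneg
    rw [htl A] at hAtrue
    exact this hAtrue
end

section
/- Joint-attack correspondence, Part A: Let (S,R0) be a joint-attack network and let λ be a legitimate Caminada–Gabbay labelling of (S,R0). Define h_λ, hN_λ : S → Bool by h_λ x = true iff λ(x) = in and hN_λ x = true iff λ(x) = out. Then (h_λ, hN_λ) is a CN-valuation (hN_λ x = true implies h_λ x = false) and is a model of the joint-attack theory Δ_A. -/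
/-- A legitimate Caminada–Gabbay labelling of a joint-attack network `(S, R0)`. -/
def LegitimateCG {S : Type*} (R0 : Set S → S → Prop) (lam : S → Lab) : Prop :=
  ∀ x : S,
    (lam x = Lab.inn ↔ ∀ G, R0 G x → ∃ y ∈ G, lam y = Lab.out) ∧
    (lam x = Lab.out ↔ ∃ G, R0 G x ∧ ∀ y ∈ G, lam y = Lab.inn) ∧
    (lam x = Lab.und ↔ ((∀ G, R0 G x → ∃ y ∈ G, lam y ≠ Lab.inn) ∧
      ∃ G, R0 G x ∧ ∀ y ∈ G, lam y = Lab.inn ∨ lam y = Lab.und))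

/-- `(h, hN)` is a model of the joint-attack theory `Δ_A` of `(S, R0)`. -/
def IsModelJoint {S : Type*} (R0 : Set S → S → Prop) (h hN : S → Bool) : Prop :=
  (∀ x, (∃ G, R0 G x ∧ ∀ z ∈ G, h z = true) → hN x = true) ∧
  (∀ x, h x = true ↔ ∀ G, R0 G x → ∃ z ∈ G, hN z = true) ∧
  (∀ x, (∀ G, R0 G x → ∃ z ∈ G, h z = false) →
    (∃ G, R0 G x ∧ ∀ z ∈ G, h z = true ∨ hN z = false) →
    h x = false ∧ hN x = false)

/-- Joint-attack correspondence, Part A: a legitimate Caminada–Gabbay labelling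
induces a CN-valuation which is a model of the joint-attack theory `Δ_A`. -/
theorem joint_correspondence_partA
    {S : Type*} [Fintype S] [Nonempty S]
    (R0 : Set S → S → Prop) (hne : ∀ G x, R0 G x → G.Nonempty)
    (lam : S → Lab) (hlam : LegitimateCG R0 lam) :
    IsCNValuation (fun x => decide (lam x = Lab.inn)) (fun x => decide (lam x = Lab.out)) ∧
    IsModelJoint R0 (fun x => decide (lam x = Lab.inn)) (fun x => decide (lam x = Lab.out)) := by
  constructor
  · intro x hx
    simp only [decide_eq_true_eq] at hx
    simp [hx]
  refine ⟨?_, ?_, ?_⟩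
  · intro x ⟨G, hG, hall⟩
    simp only [decide_eq_true_eq] at hall ⊢
    exact ((hlam x).2.1).mpr ⟨G, hG, hall⟩
  · intro x
    simp only [decide_eq_true_eq]
    exact (hlam x).1
  · intro x h1 ⟨G, hG, hall⟩
    simp only [decide_eq_true_eq, decide_eq_false_iff_not] at h1 hall ⊢
    have hund : lam x = Lab.und := by
      apply ((hlam x).2.2).mpr
      refine ⟨fun G' hG' => ?_, G, hG, fun y hy => ?_⟩
      · obtain ⟨z, hz, hzne⟩ := h1 G' hG'
        exact ⟨z, hz, hzne⟩
      · rcases hall y hy with h | h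
        · exact Or.inl h
        · cases hcase : lam y with
          | inn => exact Or.inl rfl
          | out => exact absurd hcase h
          | und => exact Or.inr rfl
    simp [hund]
end

section
/- Joint-attack correspondence, Part B: Let (S,R0) be a joint-attack network and let (h,hN) be a CN-valuation that is a model of the joint-attack theory Δ_A. Define λ_h : S → {in,out,und} by λ_h(x) = in if h x = true, λ_h(x) = out if hN x = true, and λ_h(x) = und if h x = false and hN x = false. Then λ_h is well defined and is a legitimate Caminada–Gabbay labelling of (S,R0). -/
/-- Joint-attack correspondence, Part B: a model of the joint-attack theory `Δ_A`
induces a well-defined legitimate Caminada–Gabbay labelling. -/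
theorem joint_correspondence_partB
    {S : Type*} [Fintype S] [Nonempty S]
    (R0 : Set S → S → Prop) (hne : ∀ G x, R0 G x → G.Nonempty)
    (h hN : S → Bool)
    (hval : IsCNValuation h hN) (hmod : IsModelJoint R0 h hN) :
    (∀ x : S,
      (h x = true ∧ ¬ hN x = true ∧ ¬ (h x = false ∧ hN x = false)) ∨
      (hN x = true ∧ ¬ h x = true ∧ ¬ (h x = false ∧ hN x = false)) ∨
      ((h x = false ∧ hN x = false) ∧ ¬ h x = true ∧ ¬ hN x = true)) ∧
    LegitimateCG R0 (fun x =>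
      if h x = true then Lab.inn else if hN x = true then Lab.out else Lab.und) := by
  obtain ⟨fout, fin, fund⟩ := hmod
  set lam : S → Lab := fun x =>
      if h x = true then Lab.inn else if hN x = true then Lab.out else Lab.und with hlam
  have lin : ∀ x, lam x = Lab.inn ↔ h x = true := by
    intro x; simp only [hlam]
    by_cases hx : h x = true
    · simp [hx]
    · simp [hx]; by_cases hnx : hN x = true <;> simp [hnx]
  have lout : ∀ x, lam x = Lab.out ↔ hN x = true := by
    intro x; simp only [hlam]
    by_cases hnx : hN x = true
    · simp [hnx, hval x hnx]
    · by_cases hx : h x = true <;> simp [hx, hnx]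
  have lund : ∀ x, lam x = Lab.und ↔ (h x = false ∧ hN x = false) := by
    intro x; simp only [hlam]
    by_cases hx : h x = true
    · simp [hx]
    · by_cases hnx : hN x = true <;> simp [hx, hnx] <;> simp_all
  constructor
  · intro x
    by_cases hx : h x = true
    · exact Or.inl ⟨hx, fun hn => by simp [hval x hn] at hx, fun hc => by simp [hc.1] at hx⟩
    · by_cases hnx : hN x = true
      · exact Or.inr (Or.inl ⟨hnx, hx, fun hc => by simp [hc.2] at hnx⟩)
      · exact Or.inr (Or.inr ⟨⟨by simpa using hx, by simpa using hnx⟩, hx, hnx⟩)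
  · intro x
    refine ⟨?_, ?_, ?_⟩
    · rw [lin x, fin x]
      exact ⟨fun H G hG => by obtain ⟨z, hz, hz'⟩ := H G hG; exact ⟨z, hz, (lout z).2 hz'⟩,
        fun H G hG => by obtain ⟨z, hz, hz'⟩ := H G hG; exact ⟨z, hz, (lout z).1 hz'⟩⟩
    · rw [lout x]
      constructor
      · intro hnx
        by_contra hcon
        push_neg at hcon
        have h1 : ∀ G, R0 G x → ∃ z ∈ G, h z = false := by
          intro G hG
          obtain ⟨z, hz, hz'⟩ := hcon G hG
          exact ⟨z, hz, by simpa using mt (lin z).mpr hz'⟩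
        have hxf : ¬ h x = true := by simp [hval x hnx]
        rw [fin x] at hxf; push_neg at hxf
        obtain ⟨G, hG, hGn⟩ := hxf
        have h2 : ∃ G, R0 G x ∧ ∀ z ∈ G, h z = true ∨ hN z = false := by
          refine ⟨G, hG, fun z hz => Or.inr ?_⟩
          simpa using hGn z hz
        have := (fund x h1 h2).2
        simp [this] at hnx
      · intro ⟨G, hG, hall⟩
        exact fout x ⟨G, hG, fun z hz => (lin z).1 (hall z hz)⟩
    · rw [lund x]
      constructor
      · intro ⟨hxf, hnxf⟩
        refine ⟨?_, ?_⟩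
        · intro G hG
          by_contra hc; push_neg at hc
          have : hN x = true := fout x ⟨G, hG, fun z hz => by
            have := hc z hz; rw [lin z] at this; simpa using this⟩
          simp [this] at hnxf
        · have hxf' : ¬ h x = true := by simp [hxf]
          rw [fin x] at hxf'; push_neg at hxf'
          obtain ⟨G, hG, hGn⟩ := hxf'
          refine ⟨G, hG, fun y hy => ?_⟩
          by_cases hy' : h y = true
          · exact Or.inl ((lin y).2 hy')
          · exact Or.inr ((lund y).2 ⟨by simpa using hy', by simpa using hGn y hy⟩)
      · intro ⟨H1, H2⟩
        have h1 : ∀ G, R0 G x → ∃ z ∈ G, h z = false := by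
          intro G hG
          obtain ⟨z, hz, hz'⟩ := H1 G hG
          exact ⟨z, hz, by simpa using mt (lin z).mpr hz'⟩
        have h2 : ∃ G, R0 G x ∧ ∀ z ∈ G, h z = true ∨ hN z = false := by
          obtain ⟨G, hG, hall⟩ := H2
          refine ⟨G, hG, fun z hz => ?_⟩
          rcases hall z hz with hz' | hz'
          · exact Or.inl ((lin z).1 hz')
          · exact Or.inr ((lund z).1 hz').2
        exact fund x h1 h2
end

section
/- Remark on the reduction of joint attacks (Remark 6.6): Fix x and its attacking sets G_1,…,G_n with G_i = {z_{i,1},…,z_{i,r(i)}}. Consider propositional atoms u and Nu for every u among x, the points x(G_i), the points e(x,G_i,z_{i,j}) and the points z_{i,j}. Let h be a Boolean assignment satisfying Nu → ¬u for all these atoms and the formulas: (1) x ↔ ⋀_i Nx(G_i); (2) ⋁_i x(G_i) → Nx; (3) x(G_i) ↔ ⋀_j Ne(x,G_i,z_{i,j}); (4) ⋁_j e(x,G_i,z_{i,j}) → Nx(G_i); (5a) z_{i,j} → Ne(x,G_i,z_{i,j}); (5b) (¬z_{i,j} ∧ ¬Nz_{i,j}) → (¬e(x,G_i,z_{i,j})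 ∧ ¬Ne(x,G_i,z_{i,j})); (6) e(x,G_i,z_{i,j}) ↔ Nz_{i,j}; (7a) (⋀_i ¬x(G_i) ∧ ⋁_i ¬Nx(G_i)) → (¬x ∧ ¬Nx); (7b) for each i, (⋀_j ¬e(x,G_i,z_{i,j}) ∧ ⋁_j ¬Ne(x,G_i,z_{i,j})) → (¬x(G_i) ∧ ¬Nx(G_i)). Then h satisfies the joint-attack formulas for x: x ↔ ⋀_i ⋁_j Nz_{i,j}; (⋁_i ⋀_j z_{i,j}) → Nx; and (⋀_i ⋁_j ¬z_{i,j} ∧ ⋁_i ⋀_j (z_{i,j} ∨ ¬Nz_{i,j})) → (¬x ∧ ¬Nx). -/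
/-- Remark 6.6: fix an argument `x` with attacking sets `G_1, …, G_n`, where
`G_i = {z_{i,1}, …, z_{i,r(i)}}`. The atoms are `x, Nx`, the auxiliary points
`x(G_i)` (`xg i`, `Nxg i`), `e(x,G_i,z_{i,j})` (`e i j`, `ne i j`) and the
attackers `z_{i,j}` (`z i j`, `nz i j`). Any Boolean assignment satisfying the
strong-negation axioms `Nu → ¬u` and the CN theory (1)–(7b) of the reduced
(ordinary) framework satisfies the joint-attack formulas
`F^Joint_in`, `F^Joint_out` and `F^Joint_und` for `x`. -/
theorem joint_reduction_remark (n : ℕ) (r : Fin n → ℕ)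
    (x Nx : Bool) (xg Nxg : Fin n → Bool)
    (e ne : (i : Fin n) → Fin (r i) → Bool)
    (z nz : (i : Fin n) → Fin (r i) → Bool)
    (axx : Nx = true → x = false)
    (axg : ∀ i, Nxg i = true → xg i = false)
    (axe : ∀ i j, ne i j = true → e i j = false)
    (axz : ∀ i j, nz i j = true → z i j = false)
    (h1 : x = true ↔ ∀ i, Nxg i = true)
    (h2 : (∃ i, xg i = true) → Nx = true)
    (h3 : ∀ i, xg i = true ↔ ∀ j, ne i j = true)
    (h4 : ∀ i, (∃ j, e i j = true) → Nxg i = true)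
    (h5a : ∀ i j, z i j = true → ne i j = true)
    (h5b : ∀ i j, z i j = false ∧ nz i j = false →
      e i j = false ∧ ne i j = false)
    (h6 : ∀ i j, e i j = true ↔ nz i j = true)
    (h7a : (∀ i, xg i = false) ∧ (∃ i, Nxg i = false) →
      x = false ∧ Nx = false)
    (h7b : ∀ i, (∀ j, e i j = false) ∧ (∃ j, ne i j = false) →
      xg i = false ∧ Nxg i = false) :
    (x = true ↔ ∀ i, ∃ j, nz i j = true) ∧
    ((∃ i, ∀ j, z i j = true) → Nx = true) ∧
    (((∀ i, ∃ j, z i j = false) ∧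
        (∃ i, ∀ j, z i j = true ∨ nz i j = false)) →
      x = false ∧ Nx = false) := by
  refine ⟨⟨fun hx i => ?_, fun h => h1.2 fun i => h4 i (by
      obtain ⟨j, hj⟩ := h i; exact ⟨j, (h6 i j).2 hj⟩)⟩, fun ⟨i, hi⟩ => ?_, fun ⟨hund, i, hi⟩ => ?_⟩
  · by_contra hc
    push_neg at hc
    have hNxg := h1.1 hx i
    have he : ∀ j, e i j = false := fun j => by
      have := hc j
      cases hej : e i j
      · rfl
      · exact absurd ((h6 i j).1 hej) (by simp [this])
    by_cases hne : ∀ j, ne i j = true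
    · exact absurd ((h3 i).2 hne) (by simp [axg i hNxg])
    · push_neg at hne
      obtain ⟨j, hj⟩ := hne
      have := (h7b i ⟨he, ⟨j, by simpa using hj⟩⟩).2
      simp [this] at hNxg
  · exact h2 ⟨i, (h3 i).2 fun j => h5a i j (hi j)⟩
  · have hnz : ∀ j, nz i j = false := fun j => by
      rcases hi j with hz | hz
      · cases hn : nz i j
        · rfl
        · exact absurd (axz i j hn) (by simp [hz])
      · exact hz
    have he : ∀ j, e i j = false := fun j => by
      cases hej : e i j
      · rfl
      · exact absurd ((h6 i j).1 hej) (by simp [hnz j])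
    obtain ⟨j, hj⟩ := hund i
    have hne : ne i j = false := (h5b i j ⟨hj, hnz j⟩).2
    have hNxgI := (h7b i ⟨he, ⟨j, hne⟩⟩).2
    have hxgall : ∀ i', xg i' = false := fun i' => by
      obtain ⟨j', hj'⟩ := hund i'
      cases hxg : xg i'
      · rfl
      · have hne' := (h3 i').1 hxg j'
        have he' : e i' j' = false := axe i' j' hne'
        cases hn : nz i' j'
        · exact absurd ((h5b i' j' ⟨hj', hn⟩).2) (by simp [hne'])
        · exact absurd ((h6 i' j').2 hn) (by simp [he'])
    exact h7a ⟨hxgall, ⟨i, hNxgI⟩⟩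
end

section
/- Soundness of SN: if SN ⊢ A then A is valid, i.e., for every SN-model and every world m ∈ {1,2}, A is true at m. -/
/-- Formulas of the modal logic SN: atoms (indexed by `ℕ`), constants `⊤`, `⊥`,
the world-constant `𝟙` (`one`), classical connectives, and the unary connective `N`. -/
inductive SNForm
  | atom : ℕ → SNForm
  | top : SNForm
  | bot : SNForm
  | one : SNForm
  | neg : SNForm → SNForm
  | and : SNForm → SNForm → SNForm
  | or : SNForm → SNForm → SNForm
  | imp : SNForm → SNForm → SNForm
  | nn : SNForm → SNForm

/-- Defined biconditional `A ↔ B := (A → B) ∧ (B → A)`. -/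
def SNForm.iff (A B : SNForm) : SNForm := .and (.imp A B) (.imp B A)

/-- Truth of an SN-formula at a world `m : Fin 2` (world `0` is the actual
world "1" of the paper, world `1` is the world "2"), for a valuation `v`.
`NA` is true at a world iff `A` is false at the other world. -/
def SNTruth (v : ℕ → Fin 2 → Bool) : SNForm → Fin 2 → Prop
  | .atom p, m => v p m = true
  | .top, _ => True
  | .bot, _ => False
  | .one, m => m = 0
  | .neg A, m => ¬ SNTruth v A m
  | .and A B, m => SNTruth v A m ∧ SNTruth v B m
  | .or A B, m => SNTruth v A m ∨ SNTruth v B m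
  | .imp A B, m => SNTruth v A m → SNTruth v B m
  | .nn A, m => ¬ SNTruth v A (1 - m)

/-- `f : SNForm → Bool` respects the Boolean connectives (it treats atoms,
`𝟙` and `N`-formulas as atomic). -/
def BoolHom (f : SNForm → Bool) : Prop :=
  f .top = true ∧ f .bot = false ∧
  (∀ A, f (.neg A) = !(f A)) ∧
  (∀ A B, f (.and A B) = ((f A) && (f B))) ∧
  (∀ A B, f (.or A B) = ((f A) || (f B))) ∧
  (∀ A B, f (.imp A B) = (!(f A) || (f B)))

/-- `A` is a substitution instance of a classical propositional tautology. -/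
def TautInst (A : SNForm) : Prop := ∀ f : SNForm → Bool, BoolHom f → f A = true

/-- The proof system SN: all substitution instances of classical tautologies,
axioms (K), (F), (C), (A), (T), with rules modus ponens and `A / N¬A`. -/
inductive SNProv : SNForm → Prop
  | taut {A : SNForm} : TautInst A → SNProv A
  | axK (A B : SNForm) :
      SNProv (SNForm.iff (.nn (.and A B)) (.or (.nn A) (.nn B)))
  | axF (A : SNForm) : SNProv (SNForm.iff (.neg (.nn A)) (.nn (.neg A)))
  | axC (A : SNForm) : SNProv (.imp A (.nn (.nn A)))
  | axA (p : ℕ) :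
      SNProv (.imp .one (.imp (.atom p) (.nn (.neg (.atom p)))))
  | axT : SNProv (SNForm.iff .one (.nn .one))
  | mp {A B : SNForm} : SNProv (.imp A B) → SNProv A → SNProv B
  | nrule {A : SNForm} : SNProv A → SNProv (.nn (.neg A))

/-- Boolean evaluation mirroring `SNTruth`. -/
def SNEval (v : ℕ → Fin 2 → Bool) : SNForm → Fin 2 → Bool
  | .atom p, m => v p m
  | .top, _ => true
  | .bot, _ => false
  | .one, m => decide (m = 0)
  | .neg A, m => !(SNEval v A m)
  | .and A B, m => SNEval v A m && SNEval v B m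
  | .or A B, m => SNEval v A m || SNEval v B m
  | .imp A B, m => !(SNEval v A m) || SNEval v B m
  | .nn A, m => !(SNEval v A (1 - m))

lemma SNTruth_iff_eval (v : ℕ → Fin 2 → Bool) (A : SNForm) :
    ∀ m, SNTruth v A m ↔ SNEval v A m = true := by
  induction A with
  | atom p => intro m; simp [SNTruth, SNEval]
  | top => intro m; simp [SNTruth, SNEval]
  | bot => intro m; simp [SNTruth, SNEval]
  | one => intro m; simp [SNTruth, SNEval]
  | neg A ih => intro m; simp [SNTruth, SNEval, ih]
  | and A B ihA ihB => intro m; simp [SNTruth, SNEval, ihA, ihB]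
  | or A B ihA ihB => intro m; simp [SNTruth, SNEval, ihA, ihB]
  | imp A B ihA ihB => intro m; simp only [SNTruth, SNEval, ihA, ihB]; cases SNEval v A m <;> simp
  | nn A ih => intro m; simp [SNTruth, SNEval, ih]

/-- Soundness of SN: every theorem of SN is true at both worlds of every SN-model. -/
theorem SN_soundness (A : SNForm) (h : SNProv A) :
    ∀ v : ℕ → Fin 2 → Bool, (∀ p, v p 0 = true → v p 1 = true) →
      ∀ m : Fin 2, SNTruth v A m := by

  induction h with
  | @taut A ht =>
      intro v hv m
      rw [SNTruth_iff_eval]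
      apply ht (fun B => SNEval v B m)
      refine ⟨rfl, rfl, fun A => rfl, fun A B => rfl, fun A B => rfl, fun A B => rfl⟩
  | axK A B =>
      intro v hv m
      fin_cases m <;> simp [SNForm.iff, SNTruth] <;> tauto
  | axF A =>
      intro v hv m
      fin_cases m <;> simp [SNForm.iff, SNTruth] <;> tauto
  | axC A =>
      intro v hv m
      fin_cases m <;> simp [SNTruth] <;> tauto
  | axA p =>
      intro v hv m
      fin_cases m <;> simp [SNTruth] <;> intros <;> first | (apply hv; assumption) | simp_all
  | axT =>
      intro v hv m
      fin_cases m <;> simp [SNForm.iff, SNTruth] <;> decide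
  | @mp A B h1 h2 ih1 ih2 =>
      intro v hv m
      exact ih1 v hv m (ih2 v hv m)
  | @nrule A h ih =>
      intro v hv m
      simp [SNTruth]
      exact ih v hv (1 - m)
end

section
/- Completeness of SN: if A is valid, i.e., true at both worlds of every SN-model, then SN ⊢ A. -/
namespace SNaux

inductive PForm : (n : ℕ) → Type
  | var {n} : Fin n → PForm n
  | top {n} : PForm n
  | bot {n} : PForm n
  | neg {n} : PForm n → PForm n
  | and {n} : PForm n → PForm n → PForm n
  | or {n} : PForm n → PForm n → PForm n
  | imp {n} : PForm n → PForm n → PForm n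

def PForm.iff {n} (P Q : PForm n) : PForm n := .and (.imp P Q) (.imp Q P)

def PForm.eval {n} (g : Fin n → Bool) : PForm n → Bool
  | .var i => g i
  | .top => true
  | .bot => false
  | .neg P => !(P.eval g)
  | .and P Q => P.eval g && Q.eval g
  | .or P Q => P.eval g || Q.eval g
  | .imp P Q => !(P.eval g) || Q.eval g

def PForm.subst {n} (σ : Fin n → SNForm) : PForm n → SNForm
  | .var i => σ i
  | .top => .top
  | .bot => .bot
  | .neg P => .neg (P.subst σ)
  | .and P Q => .and (P.subst σ) (Q.subst σ)
  | .or P Q => .or (P.subst σ) (Q.subst σ)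
  | .imp P Q => .imp (P.subst σ) (Q.subst σ)

theorem taut_subst {n} (P : PForm n) (σ : Fin n → SNForm)
    (h : ∀ g, P.eval g = true) : TautInst (P.subst σ) := by
  intro f hf
  obtain ⟨h1, h2, h3, h4, h5, h6⟩ := hf
  have key : ∀ Q : PForm n, f (Q.subst σ) = Q.eval (fun i => f (σ i)) := by
    intro Q
    induction Q with
    | var i => rfl
    | top => exact h1
    | bot => exact h2
    | neg P ih => simp [PForm.subst, PForm.eval, h3, ih]
    | and P Q ih1 ih2 => simp [PForm.subst, PForm.eval, h4, ih1, ih2]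
    | or P Q ih1 ih2 => simp [PForm.subst, PForm.eval, h5, ih1, ih2]
    | imp P Q ih1 ih2 => simp [PForm.subst, PForm.eval, h6, ih1, ih2]
  rw [key]; exact h _

theorem provP {n} (P : PForm n) (σ : Fin n → SNForm)
    (h : ∀ g, P.eval g = true) : SNProv (P.subst σ) :=
  .taut (taut_subst P σ h)

theorem conseq0 {n} (P : PForm n) (σ : Fin n → SNForm) {A : SNForm}
    (hP : P.subst σ = A) (h : ∀ g, P.eval g = true) : SNProv A :=
  hP ▸ provP P σ h

theorem conseq1 {n} (P₁ Q : PForm n) (σ : Fin n → SNForm) {A₁ B : SNForm}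
    (h₁ : P₁.subst σ = A₁) (hQ : Q.subst σ = B)
    (h : ∀ g, (PForm.imp P₁ Q).eval g = true)
    (hA₁ : SNProv A₁) : SNProv B := by
  subst h₁ hQ; exact SNProv.mp (provP _ σ h) hA₁

theorem conseq2 {n} (P₁ P₂ Q : PForm n) (σ : Fin n → SNForm) {A₁ A₂ B : SNForm}
    (h₁ : P₁.subst σ = A₁) (h₂ : P₂.subst σ = A₂) (hQ : Q.subst σ = B)
    (h : ∀ g, (PForm.imp P₁ (.imp P₂ Q)).eval g = true)
    (hA₁ : SNProv A₁) (hA₂ : SNProv A₂) : SNProv B := by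
  subst h₁ h₂ hQ; exact SNProv.mp (SNProv.mp (provP _ σ h) hA₁) hA₂

theorem conseq3 {n} (P₁ P₂ P₃ Q : PForm n) (σ : Fin n → SNForm) {A₁ A₂ A₃ B : SNForm}
    (h₁ : P₁.subst σ = A₁) (h₂ : P₂.subst σ = A₂) (h₃ : P₃.subst σ = A₃)
    (hQ : Q.subst σ = B)
    (h : ∀ g, (PForm.imp P₁ (.imp P₂ (.imp P₃ Q))).eval g = true)
    (hA₁ : SNProv A₁) (hA₂ : SNProv A₂) (hA₃ : SNProv A₃) : SNProv B := by
  subst h₁ h₂ h₃ hQ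
  exact SNProv.mp (SNProv.mp (SNProv.mp (provP _ σ h) hA₁) hA₂) hA₃

theorem conseq4 {n} (P₁ P₂ P₃ P₄ Q : PForm n) (σ : Fin n → SNForm)
    {A₁ A₂ A₃ A₄ B : SNForm}
    (h₁ : P₁.subst σ = A₁) (h₂ : P₂.subst σ = A₂) (h₃ : P₃.subst σ = A₃)
    (h₄ : P₄.subst σ = A₄) (hQ : Q.subst σ = B)
    (h : ∀ g, (PForm.imp P₁ (.imp P₂ (.imp P₃ (.imp P₄ Q)))).eval g = true)
    (hA₁ : SNProv A₁) (hA₂ : SNProv A₂) (hA₃ : SNProv A₃) (hA₄ : SNProv A₄) :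
    SNProv B := by
  subst h₁ h₂ h₃ h₄ hQ
  exact SNProv.mp (SNProv.mp (SNProv.mp (SNProv.mp (provP _ σ h) hA₁) hA₂) hA₃) hA₄

theorem conseq6 {n} (P₁ P₂ P₃ P₄ P₅ P₆ Q : PForm n) (σ : Fin n → SNForm)
    {A₁ A₂ A₃ A₄ A₅ A₆ B : SNForm}
    (h₁ : P₁.subst σ = A₁) (h₂ : P₂.subst σ = A₂) (h₃ : P₃.subst σ = A₃)
    (h₄ : P₄.subst σ = A₄) (h₅ : P₅.subst σ = A₅) (h₆ : P₆.subst σ = A₆)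
    (hQ : Q.subst σ = B)
    (h : ∀ g, (PForm.imp P₁ (.imp P₂ (.imp P₃ (.imp P₄ (.imp P₅ (.imp P₆ Q)))))).eval g = true)
    (hA₁ : SNProv A₁) (hA₂ : SNProv A₂) (hA₃ : SNProv A₃) (hA₄ : SNProv A₄)
    (hA₅ : SNProv A₅) (hA₆ : SNProv A₆) : SNProv B := by
  subst h₁ h₂ h₃ h₄ h₅ h₆ hQ
  exact SNProv.mp (SNProv.mp (SNProv.mp (SNProv.mp (SNProv.mp (SNProv.mp
    (provP _ σ h) hA₁) hA₂) hA₃) hA₄) hA₅) hA₆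

end SNaux

namespace SNaux

open SNForm (atom top bot one neg and or imp nn)

/-- `⊢ A ↔ A`. -/
theorem iff_refl (A : SNForm) : SNProv (SNForm.iff A A) :=
  conseq0 (.iff (.var 0) (.var 0)) ![A] rfl (by decide)

theorem iff_mp {A B : SNForm} (h : SNProv (SNForm.iff A B)) (hA : SNProv A) :
    SNProv B :=
  conseq2 (.iff (.var 0) (.var 1)) (.var 0) (.var 1) ![A, B] rfl rfl rfl
    (by decide) h hA

theorem iff_mpr {A B : SNForm} (h : SNProv (SNForm.iff A B)) (hB : SNProv B) :
    SNProv A :=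
  conseq2 (.iff (.var 0) (.var 1)) (.var 1) (.var 0) ![A, B] rfl rfl rfl
    (by decide) h hB

theorem iff_symm {A B : SNForm} (h : SNProv (SNForm.iff A B)) :
    SNProv (SNForm.iff B A) :=
  conseq1 (.iff (.var 0) (.var 1)) (.iff (.var 1) (.var 0)) ![A, B] rfl rfl
    (by decide) h

theorem iff_trans {A B C : SNForm} (h1 : SNProv (SNForm.iff A B))
    (h2 : SNProv (SNForm.iff B C)) : SNProv (SNForm.iff A C) :=
  conseq2 (.iff (.var 0) (.var 1)) (.iff (.var 1) (.var 2)) (.iff (.var 0) (.var 2))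
    ![A, B, C] rfl rfl rfl (by decide) h1 h2

theorem iff_congr_neg {A B : SNForm} (h : SNProv (SNForm.iff A B)) :
    SNProv (SNForm.iff (.neg A) (.neg B)) :=
  conseq1 (.iff (.var 0) (.var 1)) (.iff (.neg (.var 0)) (.neg (.var 1))) ![A, B]
    rfl rfl (by decide) h

theorem iff_congr_and {A B A' B' : SNForm} (h1 : SNProv (SNForm.iff A A'))
    (h2 : SNProv (SNForm.iff B B')) :
    SNProv (SNForm.iff (.and A B) (.and A' B')) :=
  conseq2 (.iff (.var 0) (.var 1)) (.iff (.var 2) (.var 3))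
    (.iff (.and (.var 0) (.var 2)) (.and (.var 1) (.var 3)))
    ![A, A', B, B'] rfl rfl rfl (by decide) h1 h2

theorem iff_congr_or {A B A' B' : SNForm} (h1 : SNProv (SNForm.iff A A'))
    (h2 : SNProv (SNForm.iff B B')) :
    SNProv (SNForm.iff (.or A B) (.or A' B')) :=
  conseq2 (.iff (.var 0) (.var 1)) (.iff (.var 2) (.var 3))
    (.iff (.or (.var 0) (.var 2)) (.or (.var 1) (.var 3)))
    ![A, A', B, B'] rfl rfl rfl (by decide) h1 h2

theorem iff_congr_imp {A B A' B' : SNForm} (h1 : SNProv (SNForm.iff A A'))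
    (h2 : SNProv (SNForm.iff B B')) :
    SNProv (SNForm.iff (.imp A B) (.imp A' B')) :=
  conseq2 (.iff (.var 0) (.var 1)) (.iff (.var 2) (.var 3))
    (.iff (.imp (.var 0) (.var 2)) (.imp (.var 1) (.var 3)))
    ![A, A', B, B'] rfl rfl rfl (by decide) h1 h2

/-- `⊢ NA ↔ ¬N¬A` (from axiom F). -/
theorem F' (A : SNForm) : SNProv (SNForm.iff (.nn A) (.neg (.nn (.neg A)))) :=
  conseq1 (.iff (.neg (.var 0)) (.var 1)) (.iff (.var 0) (.neg (.var 1)))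
    ![.nn A, .nn (.neg A)] rfl rfl (by decide) (SNProv.axF A)

/-- `⊢ NA ↔ N¬¬A`. -/
theorem dn (A : SNForm) :
    SNProv (SNForm.iff (.nn A) (.nn (.neg (.neg A)))) :=
  conseq2 (.iff (.neg (.var 0)) (.var 1)) (.iff (.neg (.var 1)) (.var 2))
    (.iff (.var 0) (.var 2))
    ![.nn A, .nn (.neg A), .nn (.neg (.neg A))] rfl rfl rfl (by decide)
    (SNProv.axF A) (SNProv.axF (.neg A))

/-- From `⊢ ¬A` infer `⊢ NA`. -/
theorem nn_of_neg {A : SNForm} (h : SNProv (.neg A)) : SNProv (.nn A) :=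
  iff_mpr (dn A) (SNProv.nrule h)

/-- From `⊢ A → B` infer `⊢ N(A ∧ ¬B)`. -/
theorem prov_nand {A B : SNForm} (h : SNProv (.imp A B)) :
    SNProv (.nn (.and A (.neg B))) :=
  nn_of_neg
    (conseq1 (.imp (.var 0) (.var 1)) (.neg (.and (.var 0) (.neg (.var 1))))
      ![A, B] rfl rfl (by decide) h)

/-- N is antitone: from `⊢ A → B` infer `⊢ NB → NA`. -/
theorem anti {A B : SNForm} (h : SNProv (.imp A B)) :
    SNProv (.imp (.nn B) (.nn A)) :=
  conseq3 (.var 0) (.iff (.var 0) (.or (.var 1) (.var 2)))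
    (.iff (.neg (.var 3)) (.var 2)) (.imp (.var 3) (.var 1))
    ![.nn (.and A (.neg B)), .nn A, .nn (.neg B), .nn B] rfl rfl rfl rfl
    (by decide) (prov_nand h) (SNProv.axK A (.neg B)) (SNProv.axF B)

/-- Congruence of N. -/
theorem iff_nn {A B : SNForm} (h : SNProv (SNForm.iff A B)) :
    SNProv (SNForm.iff (.nn A) (.nn B)) := by
  have hab : SNProv (.imp A B) :=
    conseq1 (.iff (.var 0) (.var 1)) (.imp (.var 0) (.var 1)) ![A, B] rfl rfl
      (by decide) h
  have hba : SNProv (.imp B A) :=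
    conseq1 (.iff (.var 0) (.var 1)) (.imp (.var 1) (.var 0)) ![A, B] rfl rfl
      (by decide) h
  exact conseq2 (.imp (.var 0) (.var 1)) (.imp (.var 1) (.var 0))
    (.iff (.var 0) (.var 1)) ![.nn A, .nn B] rfl rfl rfl (by decide)
    (anti hba) (anti hab)

/-- `⊢ NNA ↔ A`. -/
theorem nn_nn (A : SNForm) : SNProv (SNForm.iff (.nn (.nn A)) A) :=
  conseq4 (.iff (.var 0) (.var 1)) (.iff (.neg (.var 2)) (.var 1))
    (.imp (.neg (.var 3)) (.var 2)) (.imp (.var 3) (.var 0))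
    (.iff (.var 0) (.var 3))
    ![.nn (.nn A), .nn (.neg (.nn (.neg A))), .nn (.nn (.neg A)), A]
    rfl rfl rfl rfl rfl (by decide)
    (iff_nn (F' A)) (SNProv.axF (.nn (.neg A))) (SNProv.axC (.neg A))
    (SNProv.axC A)

/-- `⊢ N¬(A∧B) ↔ N¬A ∧ N¬B`. -/
theorem nand' (A B : SNForm) :
    SNProv (SNForm.iff (.nn (.neg (.and A B)))
      (.and (.nn (.neg A)) (.nn (.neg B)))) :=
  conseq4 (.iff (.neg (.var 0)) (.var 1)) (.iff (.var 0) (.or (.var 2) (.var 3)))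
    (.iff (.neg (.var 2)) (.var 4)) (.iff (.neg (.var 3)) (.var 5))
    (.iff (.var 1) (.and (.var 4) (.var 5)))
    ![.nn (.and A B), .nn (.neg (.and A B)), .nn A, .nn B,
      .nn (.neg A), .nn (.neg B)]
    rfl rfl rfl rfl rfl (by decide)
    (SNProv.axF (.and A B)) (SNProv.axK A B) (SNProv.axF A) (SNProv.axF B)

/-- `⊢ N¬(A∨B) ↔ N¬A ∨ N¬B`. -/
theorem nor' (A B : SNForm) :
    SNProv (SNForm.iff (.nn (.neg (.or A B)))
      (.or (.nn (.neg A)) (.nn (.neg B)))) := by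
  have e1 : SNProv (SNForm.iff (.neg (.or A B)) (.and (.neg A) (.neg B))) :=
    conseq0 (.iff (.neg (.or (.var 0) (.var 1)))
      (.and (.neg (.var 0)) (.neg (.var 1)))) ![A, B] rfl (by decide)
  exact iff_trans (iff_nn e1) (SNProv.axK (.neg A) (.neg B))

/-- `⊢ N¬(A→B) ↔ (N¬A → N¬B)`. -/
theorem nimp' (A B : SNForm) :
    SNProv (SNForm.iff (.nn (.neg (.imp A B)))
      (.imp (.nn (.neg A)) (.nn (.neg B)))) := by
  have e1 : SNProv (SNForm.iff (.neg (.imp A B)) (.and A (.neg B))) :=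
    conseq0 (.iff (.neg (.imp (.var 0) (.var 1)))
      (.and (.var 0) (.neg (.var 1)))) ![A, B] rfl (by decide)
  exact conseq3 (.iff (.var 0) (.var 1)) (.iff (.var 1) (.or (.var 2) (.var 3)))
    (.iff (.neg (.var 2)) (.var 4))
    (.iff (.var 0) (.imp (.var 4) (.var 3)))
    ![.nn (.neg (.imp A B)), .nn (.and A (.neg B)), .nn A, .nn (.neg B),
      .nn (.neg A)]
    rfl rfl rfl rfl (by decide)
    (iff_nn e1) (SNProv.axK A (.neg B)) (SNProv.axF A)

/-- `⊢ N¬¬A ↔ ¬N¬A`. -/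
theorem nneg' (A : SNForm) :
    SNProv (SNForm.iff (.nn (.neg (.neg A))) (.neg (.nn (.neg A)))) :=
  conseq2 (.iff (.var 0) (.var 1)) (.iff (.neg (.var 0)) (.var 2))
    (.iff (.var 1) (.neg (.var 2)))
    ![.nn A, .nn (.neg (.neg A)), .nn (.neg A)] rfl rfl rfl (by decide)
    (dn A) (SNProv.axF A)

/-- `⊢ N¬𝟙 ↔ ¬𝟙`. -/
theorem none' : SNProv (SNForm.iff (.nn (.neg .one)) (.neg .one)) :=
  conseq2 (.iff (.var 0) (.var 1)) (.iff (.neg (.var 1)) (.var 2))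
    (.iff (.var 2) (.neg (.var 0)))
    ![.one, .nn .one, .nn (.neg .one)] rfl rfl rfl (by decide)
    SNProv.axT (SNProv.axF .one)

theorem ntop : SNProv (.nn (.neg .top)) :=
  SNProv.nrule (conseq0 .top ![] rfl (by decide))

theorem nbot : SNProv (.neg (.nn (.neg .bot))) := by
  have e1 : SNProv (SNForm.iff (.neg .bot) .top) :=
    conseq0 (.iff (.neg .bot) .top) ![] rfl (by decide)
  exact conseq3 (.iff (.var 0) (.var 1)) (.iff (.neg (.var 1)) (.var 2)) (.var 2)
    (.neg (.var 0))
    ![.nn (.neg .bot), .nn .top, .nn (.neg .top)] rfl rfl rfl rfl (by decide)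
    (iff_nn e1) (SNProv.axF .top) ntop

set_option maxRecDepth 10000 in
/-- Mirror of axiom (A): `⊢ ¬𝟙 → (N¬p → p)`. -/
theorem axA' (p : ℕ) :
    SNProv (.imp (.neg .one) (.imp (.nn (.neg (.atom p))) (.atom p))) := by
  have h0 : SNProv (.nn (.neg (.imp .one (.imp (.atom p) (.nn (.neg (.atom p))))))) :=
    SNProv.nrule (SNProv.axA p)
  exact conseq6 (.var 0) (.iff (.var 0) (.imp (.var 2) (.var 1)))
    (.iff (.var 1) (.imp (.var 3) (.var 4)))
    (.iff (.var 2) (.neg (.var 7)))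
    (.iff (.neg (.var 5)) (.var 4))
    (.iff (.var 5) (.neg (.var 6)))
    (.imp (.neg (.var 7)) (.imp (.var 3) (.var 6)))
    ![.nn (.neg (.imp .one (.imp (.atom p) (.nn (.neg (.atom p)))))),
      .nn (.neg (.imp (.atom p) (.nn (.neg (.atom p))))),
      .nn (.neg .one),
      .nn (.neg (.atom p)),
      .nn (.neg (.nn (.neg (.atom p)))),
      .nn (.nn (.neg (.atom p))),
      .atom p,
      .one]
    rfl rfl rfl rfl rfl rfl rfl (by decide)
    h0
    (nimp' .one (.imp (.atom p) (.nn (.neg (.atom p)))))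
    (nimp' (.atom p) (.nn (.neg (.atom p))))
    none'
    (SNProv.axF (.nn (.neg (.atom p))))
    (nn_nn (.neg (.atom p)))

end SNaux

namespace SNaux

/-- Translation into "basic" form: `tr A s` is a formula built from atoms `p`,
formulas `N¬p`, `𝟙` and Boolean connectives, expressing (at world `m`) the truth
of `A` at world `m` (if `s = false`) or at the other world (if `s = true`). -/
def tr : SNForm → Bool → SNForm
  | .atom p, false => .atom p
  | .atom p, true => .nn (.neg (.atom p))
  | .top, _ => .top
  | .bot, _ => .bot
  | .one, false => .one
  | .one, true => .neg .one
  | .neg A, s => .neg (tr A s)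
  | .and A B, s => .and (tr A s) (tr B s)
  | .or A B, s => .or (tr A s) (tr B s)
  | .imp A B, s => .imp (tr A s) (tr B s)
  | .nn A, s => .neg (tr A (!s))

theorem tr_truth (v : ℕ → Fin 2 → Bool) (A : SNForm) :
    ∀ (s : Bool) (m : Fin 2),
      (SNTruth v (tr A s) m ↔ SNTruth v A (if s then 1 - m else m)) := by
  induction A with
  | atom p => intro s m; cases s <;> simp [tr, SNTruth]
  | top => intro s m; cases s <;> simp [tr, SNTruth]
  | bot => intro s m; cases s <;> simp [tr, SNTruth]
  | one =>
      intro s m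
      cases s
      · simp [tr, SNTruth]
      · have : ((1 : Fin 2) - m = 0) ↔ ¬(m = 0) := by fin_cases m <;> decide
        simp [tr, SNTruth, this]
  | neg A ih => intro s m; simp [tr, SNTruth, ih]
  | and A B ihA ihB => intro s m; simp [tr, SNTruth, ihA, ihB]
  | or A B ihA ihB => intro s m; simp [tr, SNTruth, ihA, ihB]
  | imp A B ihA ihB => intro s m; simp [tr, SNTruth, ihA, ihB]
  | nn A ih =>
      intro s m
      have key : (if !s then (1 : Fin 2) - m else m)
          = 1 - (if s then 1 - m else m) := by
        cases s <;> fin_cases m <;> decide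
      calc SNTruth v (tr (.nn A) s) m
          ↔ ¬ SNTruth v (tr A (!s)) m := Iff.rfl
        _ ↔ ¬ SNTruth v A (if !s then 1 - m else m) := by rw [ih]
        _ ↔ ¬ SNTruth v A (1 - (if s then 1 - m else m)) := by rw [key]
        _ ↔ SNTruth v (.nn A) (if s then 1 - m else m) := Iff.rfl

/-- Main provable-equivalence lemma: `⊢ A ↔ tr A false` and `⊢ N¬A ↔ tr A true`. -/
theorem trP (A : SNForm) :
    SNProv (SNForm.iff A (tr A false)) ∧
      SNProv (SNForm.iff (.nn (.neg A)) (tr A true)) := by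
  induction A with
  | atom p => exact ⟨iff_refl _, iff_refl _⟩
  | top =>
      refine ⟨iff_refl _, ?_⟩
      exact conseq1 (.var 0) (.iff (.var 0) .top) ![.nn (.neg .top)] rfl rfl
        (by decide) ntop
  | bot =>
      refine ⟨iff_refl _, ?_⟩
      exact conseq1 (.neg (.var 0)) (.iff (.var 0) .bot) ![.nn (.neg .bot)]
        rfl rfl (by decide) nbot
  | one => exact ⟨iff_refl _, none'⟩
  | neg A ih =>
      refine ⟨iff_congr_neg ih.1, ?_⟩
      -- target: N¬¬A ↔ ¬ (tr A true)
      exact iff_trans (nneg' A) (iff_congr_neg ih.2)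
  | and A B ihA ihB =>
      exact ⟨iff_congr_and ihA.1 ihB.1,
        iff_trans (nand' A B) (iff_congr_and ihA.2 ihB.2)⟩
  | or A B ihA ihB =>
      exact ⟨iff_congr_or ihA.1 ihB.1,
        iff_trans (nor' A B) (iff_congr_or ihA.2 ihB.2)⟩
  | imp A B ihA ihB =>
      exact ⟨iff_congr_imp ihA.1 ihB.1,
        iff_trans (nimp' A B) (iff_congr_imp ihA.2 ihB.2)⟩
  | nn A ih =>
      constructor
      · -- ⊢ NA ↔ ¬(tr A true)
        exact conseq2 (.iff (.var 0) (.neg (.var 1))) (.iff (.var 1) (.var 2))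
          (.iff (.var 0) (.neg (.var 2)))
          ![.nn A, .nn (.neg A), tr A true] rfl rfl rfl (by decide)
          (F' A) ih.2
      · -- ⊢ N¬NA ↔ ¬(tr A false)
        exact conseq3 (.iff (.neg (.var 0)) (.var 1)) (.iff (.var 0) (.var 2))
          (.iff (.var 2) (.var 3)) (.iff (.var 1) (.neg (.var 3)))
          ![.nn (.nn A), .nn (.neg (.nn A)), A, tr A false] rfl rfl rfl rfl
          (by decide) (SNProv.axF (.nn A)) (nn_nn A) ih.1

end SNaux

namespace SNaux

/-- Basic formulas: built from atoms `p`, formulas `N¬p`, `⊤`, `⊥`, `𝟙` by the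
Boolean connectives. -/
inductive IsBasic : SNForm → Prop
  | atom (p : ℕ) : IsBasic (.atom p)
  | natom (p : ℕ) : IsBasic (.nn (.neg (.atom p)))
  | top : IsBasic .top
  | bot : IsBasic .bot
  | one : IsBasic .one
  | neg {A} : IsBasic A → IsBasic (.neg A)
  | and {A B} : IsBasic A → IsBasic B → IsBasic (.and A B)
  | or {A B} : IsBasic A → IsBasic B → IsBasic (.or A B)
  | imp {A B} : IsBasic A → IsBasic B → IsBasic (.imp A B)

theorem tr_basic (A : SNForm) : ∀ s, IsBasic (tr A s) := by
  induction A with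
  | atom p =>
      intro s
      cases s
      · exact .atom p
      · exact .natom p
  | top => intro s; cases s <;> exact .top
  | bot => intro s; cases s <;> exact .bot
  | one =>
      intro s
      cases s
      · exact .one
      · exact .neg .one
  | neg A ih => intro s; exact .neg (ih s)
  | and A B ihA ihB => intro s; exact .and (ihA s) (ihB s)
  | or A B ihA ihB => intro s; exact .or (ihA s) (ihB s)
  | imp A B ihA ihB => intro s; exact .imp (ihA s) (ihB s)
  | nn A ih => intro s; exact .neg (ih (!s))

/-- Atoms occurring in a formula. -/
def atomsIn : SNForm → List ℕ
  | .atom p => [p]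
  | .top => []
  | .bot => []
  | .one => []
  | .neg A => atomsIn A
  | .and A B => atomsIn A ++ atomsIn B
  | .or A B => atomsIn A ++ atomsIn B
  | .imp A B => atomsIn A ++ atomsIn B
  | .nn A => atomsIn A

/-- The provable hypothesis about a single atom: at world 1 (`𝟙`), `p → N¬p`,
and at world 2 (`¬𝟙`), `N¬p → p`. -/
def hypFor (p : ℕ) : SNForm :=
  .and (.imp .one (.imp (.atom p) (.nn (.neg (.atom p)))))
    (.imp (.neg .one) (.imp (.nn (.neg (.atom p))) (.atom p)))

theorem hypFor_prov (p : ℕ) : SNProv (hypFor p) :=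
  conseq2 (.var 0) (.var 1) (.and (.var 0) (.var 1))
    ![.imp .one (.imp (.atom p) (.nn (.neg (.atom p)))),
      .imp (.neg .one) (.imp (.nn (.neg (.atom p))) (.atom p))]
    rfl rfl rfl (by decide) (SNProv.axA p) (axA' p)

def hypConj (L : List ℕ) : SNForm := L.foldr (fun p B => .and (hypFor p) B) .top

theorem hypConj_prov (L : List ℕ) : SNProv (hypConj L) := by
  induction L with
  | nil => exact conseq0 .top ![] rfl (by decide)
  | cons p L ih =>
      exact conseq2 (.var 0) (.var 1) (.and (.var 0) (.var 1))
        ![hypFor p, hypConj L] rfl rfl rfl (by decide) (hypFor_prov p) ih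

theorem hypConj_mem {f : SNForm → Bool}
    (h4 : ∀ A B, f (.and A B) = ((f A) && (f B)))
    {L : List ℕ} (hf : f (hypConj L) = true) :
    ∀ p ∈ L, f (hypFor p) = true := by
  induction L with
  | nil => intro p hp; cases hp
  | cons q L ih =>
      intro p hp
      rw [show hypConj (q :: L) = .and (hypFor q) (hypConj L) from rfl, h4] at hf
      rcases List.mem_cons.mp hp with rfl | hp
      · exact (Bool.and_eq_true_iff.mp hf).1
      · exact ih (Bool.and_eq_true_iff.mp hf).2 p hp

/-- The countermodel extracted from a Boolean homomorphism. -/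
def vOf (f : SNForm → Bool) : ℕ → Fin 2 → Bool := fun p m =>
  if m = 0 then f (.atom p) && f (.nn (.neg (.atom p)))
  else (if f .one then f (.nn (.neg (.atom p))) else f (.atom p))

def mOf (f : SNForm → Bool) : Fin 2 := if f .one then 0 else 1

theorem vOf_mono (f : SNForm → Bool) (p : ℕ) (hp : vOf f p 0 = true) :
    vOf f p 1 = true := by
  simp only [vOf] at hp ⊢
  norm_num at hp ⊢
  cases f .one <;> simp_all

theorem key_lemma (f : SNForm → Bool)
    (h1 : f .top = true) (h2 : f .bot = false)
    (h3 : ∀ A, f (.neg A) = !(f A))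
    (h4 : ∀ A B, f (.and A B) = ((f A) && (f B)))
    (h5 : ∀ A B, f (.or A B) = ((f A) || (f B)))
    (h6 : ∀ A B, f (.imp A B) = (!(f A) || (f B)))
    (L : List ℕ) (hcond : ∀ p ∈ L, f (hypFor p) = true)
    (C : SNForm) (hC : IsBasic C) :
    (∀ p ∈ atomsIn C, p ∈ L) → (SNTruth (vOf f) C (mOf f) ↔ f C = true) := by
  induction hC with
  | atom p =>
      intro hsub
      have hc := hcond p (hsub p (by simp [atomsIn]))
      simp only [hypFor, h4, h6, h3] at hc
      show (vOf f p (mOf f) = true) ↔ _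
      simp only [vOf, mOf]
      rcases Bool.eq_false_or_eq_true (f .one) with hox | hox <;>
        simp [hox] at hc ⊢ <;>
      cases hfa : f (.atom p) <;> cases hfy : f (.nn (.neg (.atom p))) <;>
        simp_all
  | natom p =>
      intro hsub
      have hc := hcond p (hsub p (by simp [atomsIn]))
      simp only [hypFor, h4, h6, h3] at hc
      show (¬ ¬ (vOf f p (1 - mOf f) = true)) ↔ _
      rw [not_not]
      simp only [vOf, mOf]
      rcases Bool.eq_false_or_eq_true (f .one) with hox | hox <;>
        simp [hox, show (1 : Fin 2) - 0 = 1 from rfl,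
          show (1 : Fin 2) - 1 = 0 from rfl] at hc ⊢ <;>
      cases hfa : f (.atom p) <;> cases hfy : f (.nn (.neg (.atom p))) <;>
        simp_all
  | top => intro _; show True ↔ _; simp [h1]
  | bot => intro _; show False ↔ _; simp [h2]
  | one =>
      intro _
      show (mOf f = 0) ↔ _
      simp only [mOf]
      rcases Bool.eq_false_or_eq_true (f .one) with hox | hox <;> simp [hox]
  | neg hA ihA =>
      intro hsub
      show (¬ _) ↔ _
      rw [h3, ihA hsub]
      simp
  | and hA hB ihA ihB =>
      intro hsub
      show (_ ∧ _) ↔ _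
      rw [h4, ihA (fun p hp => hsub p (by simp [atomsIn]; tauto)),
        ihB (fun p hp => hsub p (by simp [atomsIn]; tauto))]
      simp
  | or hA hB ihA ihB =>
      intro hsub
      show (_ ∨ _) ↔ _
      rw [h5, ihA (fun p hp => hsub p (by simp [atomsIn]; tauto)),
        ihB (fun p hp => hsub p (by simp [atomsIn]; tauto))]
      simp
  | imp hA hB ihA ihB =>
      intro hsub
      show (_ → _) ↔ _
      rw [h6, ihA (fun p hp => hsub p (by simp [atomsIn]; tauto)),
        ihB (fun p hp => hsub p (by simp [atomsIn]; tauto))]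
      cases hfa : f _ <;> simp

/-- Completeness for basic formulas. -/
theorem basic_complete (B : SNForm) (hB : IsBasic B)
    (hval : ∀ v : ℕ → Fin 2 → Bool, (∀ p, v p 0 = true → v p 1 = true) →
      ∀ m : Fin 2, SNTruth v B m) : SNProv B := by
  have hhyp : SNProv (hypConj (atomsIn B)) := hypConj_prov _
  have timp : TautInst (.imp (hypConj (atomsIn B)) B) := by
    intro f hf
    obtain ⟨h1, h2, h3, h4, h5, h6⟩ := hf
    rw [h6]
    cases hh : f (hypConj (atomsIn B)) with
    | false => simp
    | true =>
      suffices hfB : f B = true by simp [hfB]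
      exact (key_lemma f h1 h2 h3 h4 h5 h6 (atomsIn B) (hypConj_mem h4 hh)
        B hB (fun p hp => hp)).mp (hval (vOf f) (vOf_mono f) (mOf f))
  exact (SNProv.taut timp).mp hhyp

end SNaux

/-- Completeness of SN: every formula true at both worlds of every SN-model is
a theorem of SN. -/
theorem SN_completeness (A : SNForm)
    (h : ∀ v : ℕ → Fin 2 → Bool, (∀ p, v p 0 = true → v p 1 = true) →
      ∀ m : Fin 2, SNTruth v A m) :
    SNProv A := by
  obtain ⟨h1, -⟩ := SNaux.trP A
  have hval : ∀ v : ℕ → Fin 2 → Bool, (∀ p, v p 0 = true → v p 1 = true) →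
      ∀ m : Fin 2, SNTruth v (SNaux.tr A false) m := by
    intro v hv m
    exact (SNaux.tr_truth v A false m).mpr (h v hv m)
  exact SNaux.iff_mpr h1 (SNaux.basic_complete _ (SNaux.tr_basic A false) hval)
end

section
/- Relation between CN and SN (final Appendix theorem): Let A be an SN-formula that does not contain the constant 𝟙 and in which every occurrence of N is applied to an atom. Then A is a theorem of the logic CN (reading each CN-atom Nq as the SN-formula Nq) if and only if SN ⊢ 𝟙 → A. -/
/-- `A` is a formula of the language of CN: it does not contain the constant `𝟙`
and every occurrence of `N` is applied to an atom. -/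
def InCN : SNForm → Prop
  | .atom _ => True
  | .top => True
  | .bot => True
  | .one => False
  | .neg A => InCN A
  | .and A B => InCN A ∧ InCN B
  | .or A B => InCN A ∧ InCN B
  | .imp A B => InCN A ∧ InCN B
  | .nn (.atom _) => True
  | .nn _ => False

/-- Classical Boolean evaluation of CN-formulas, where the atoms `q` are
evaluated by `v` and the atoms `Nq` by `vN`, treated as independent atoms.
(The values on formulas outside the CN fragment are irrelevant.) -/
def evalCN (v vN : ℕ → Bool) : SNForm → Bool
  | .atom p => v p
  | .top => true
  | .bot => false
  | .one => false
  | .neg A => !(evalCN v vN A)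
  | .and A B => (evalCN v vN A) && (evalCN v vN B)
  | .or A B => (evalCN v vN A) || (evalCN v vN B)
  | .imp A B => !(evalCN v vN A) || (evalCN v vN B)
  | .nn (.atom p) => vN p
  | .nn _ => false

/-- Theoremhood in the logic CN: derivability, by modus ponens, from the
classical tautologies over the atomic formulas `q`, `Nq` together with the
theory `Θ_n = {Nq → ¬q}`. -/
inductive CNProv : SNForm → Prop
  | taut {A : SNForm} : InCN A → (∀ v vN : ℕ → Bool, evalCN v vN A = true) →
      CNProv A
  | theta (p : ℕ) : CNProv (.imp (.nn (.atom p)) (.neg (.atom p)))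
  | mp {A B : SNForm} : CNProv (.imp A B) → CNProv A → CNProv B

lemma SNTruth_iff (v : ℕ → Fin 2 → Bool) (A : SNForm) (m : Fin 2) :
    SNTruth v A m ↔ SNEval v A m = true := by
  induction A generalizing m with
  | atom p => simp [SNTruth, SNEval]
  | top => simp [SNTruth, SNEval]
  | bot => simp [SNTruth, SNEval]
  | one => simp [SNTruth, SNEval]
  | neg A ih => simp [SNTruth, SNEval, ih]
  | and A B ihA ihB => simp [SNTruth, SNEval, ihA, ihB]
  | or A B ihA ihB => simp [SNTruth, SNEval, ihA, ihB]
  | imp A B ihA ihB => simp [SNTruth, SNEval, ihA, ihB, imp_iff_not_or, or_comm]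
  | nn A ih => simp [SNTruth, SNEval, ih]

/-- Good valuations: whatever is true at world 0 is true at world 1. -/
def GoodVal (v : ℕ → Fin 2 → Bool) : Prop := ∀ p, v p 0 = true → v p 1 = true

lemma sn_sound {B : SNForm} (h : SNProv B) :
    ∀ v : ℕ → Fin 2 → Bool, GoodVal v → ∀ m, SNTruth v B m := by
  induction h with
  | @taut A h =>
      intro v hv m
      rw [SNTruth_iff]
      exact h (fun C => SNEval v C m)
        ⟨rfl, rfl, fun _ => rfl, fun _ _ => rfl, fun _ _ => rfl, fun _ _ => rfl⟩
  | axK A B =>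
      intro v hv m
      simp only [SNForm.iff, SNTruth]
      constructor <;> intro h <;> tauto
  | axF A =>
      intro v hv m
      simp only [SNForm.iff, SNTruth]
      tauto
  | axC A =>
      intro v hv m
      have : 1 - (1 - m) = m := by fin_cases m <;> rfl
      simp only [SNTruth, this]
      tauto
  | axA p =>
      intro v hv m
      simp only [SNTruth]
      intro hm hp
      subst hm
      show ¬¬(v p 1 = true)
      simp [hv p hp]
  | axT =>
      intro v hv m
      fin_cases m <;> simp only [SNForm.iff, SNTruth] <;>
        refine ⟨fun h => ?_, fun h => ?_⟩ <;> simp_all <;> decide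
  | mp h1 h2 ih1 ih2 =>
      intro v hv m
      exact (ih1 v hv m) (ih2 v hv m)
  | nrule h ih =>
      intro v hv m
      simp only [SNTruth]
      exact fun hc => hc (ih v hv (1 - m))

/-- A valid CN-formula is a tautology instance as an SN-formula. -/
lemma tautInst_of_CN {A : SNForm} (hA : InCN A)
    (h : ∀ v vN : ℕ → Bool, evalCN v vN A = true) : TautInst A := by
  intro f hf
  obtain ⟨h1, h2, h3, h4, h5, h6⟩ := hf
  have key : ∀ B, InCN B →
      f B = evalCN (fun p => f (.atom p)) (fun p => f (.nn (.atom p))) B := by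
    intro B hB
    induction B with
    | atom p => rfl
    | top => exact h1
    | bot => exact h2
    | one => exact absurd hB (by simp [InCN])
    | neg B ih => rw [h3, ih hB]; rfl
    | and B C ihB ihC => rw [h4, ihB hB.1, ihC hB.2]; rfl
    | or B C ihB ihC => rw [h5, ihB hB.1, ihC hB.2]; rfl
    | imp B C ihB ihC => rw [h6, ihB hB.1, ihC hB.2]; rfl
    | nn B ih => cases B <;> simp [InCN] at hB <;> rfl
  rw [key A hA]
  exact h _ _

lemma taut_weaken (B : SNForm) : TautInst (.imp B (.imp .one B)) := by
  intro f hf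
  obtain ⟨h1, h2, h3, h4, h5, h6⟩ := hf
  simp only [h6]
  cases f B <;> simp

lemma taut_distrib (A B : SNForm) :
    TautInst (.imp (.imp .one (.imp A B)) (.imp (.imp .one A) (.imp .one B))) := by
  intro f hf
  obtain ⟨h1, h2, h3, h4, h5, h6⟩ := hf
  simp only [h6]
  cases f .one <;> cases f A <;> cases f B <;> simp

lemma taut_theta (p : ℕ) :
    TautInst (.imp (.imp .one (.imp (.atom p) (.nn (.neg (.atom p)))))
      (.imp (SNForm.iff (.neg (.nn (.atom p))) (.nn (.neg (.atom p))))
        (.imp .one (.imp (.nn (.atom p)) (.neg (.atom p)))))) := by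
  intro f hf
  obtain ⟨h1, h2, h3, h4, h5, h6⟩ := hf
  simp only [SNForm.iff, h6, h4, h3]
  cases f .one <;> cases f (.atom p) <;> cases f (.nn (.neg (.atom p))) <;>
    cases f (.nn (.atom p)) <;> simp

lemma cn_to_sn {A : SNForm} (h : CNProv A) : SNProv (.imp .one A) := by
  induction h with
  | @taut A hIn hval =>
      exact SNProv.mp (SNProv.taut (taut_weaken A)) (SNProv.taut (tautInst_of_CN hIn hval))
  | theta p =>
      exact SNProv.mp (SNProv.mp (SNProv.taut (taut_theta p)) (SNProv.axA p))
        (SNProv.axF (.atom p))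
  | mp h1 h2 ih1 ih2 =>
      exact SNProv.mp (SNProv.mp (SNProv.taut (taut_distrib _ _)) ih1) ih2

/-- Atoms occurring in a formula. -/
def SNAtoms : SNForm → List ℕ
  | .atom p => [p]
  | .top => []
  | .bot => []
  | .one => []
  | .neg A => SNAtoms A
  | .and A B => SNAtoms A ++ SNAtoms B
  | .or A B => SNAtoms A ++ SNAtoms B
  | .imp A B => SNAtoms A ++ SNAtoms B
  | .nn A => SNAtoms A

lemma evalCN_congr (v vN vN' : ℕ → Bool) (A : SNForm)
    (h : ∀ p ∈ SNAtoms A, vN p = vN' p) :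
    evalCN v vN A = evalCN v vN' A := by
  induction A with
  | atom p => rfl
  | top => rfl
  | bot => rfl
  | one => rfl
  | neg A ih => simp only [evalCN]; rw [ih h]
  | and A B ihA ihB =>
      simp only [evalCN]
      rw [ihA fun p hp => h p (by simp [SNAtoms, hp]),
        ihB fun p hp => h p (by simp [SNAtoms, hp])]
  | or A B ihA ihB =>
      simp only [evalCN]
      rw [ihA fun p hp => h p (by simp [SNAtoms, hp]),
        ihB fun p hp => h p (by simp [SNAtoms, hp])]
  | imp A B ihA ihB =>
      simp only [evalCN]
      rw [ihA fun p hp => h p (by simp [SNAtoms, hp]),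
        ihB fun p hp => h p (by simp [SNAtoms, hp])]
  | nn A ih =>
      cases A <;> simp only [evalCN]
      exact h _ (by simp [SNAtoms])

/-- Prefixing a formula with the theta-premises for a list of atoms. -/
def prem (l : List ℕ) (A : SNForm) : SNForm :=
  l.foldr (fun p B => .imp (.imp (.nn (.atom p)) (.neg (.atom p))) B) A

lemma cn_of_prem {A : SNForm} : ∀ l : List ℕ, CNProv (prem l A) → CNProv A := by
  intro l
  induction l with
  | nil => exact id
  | cons p l ih => exact fun h => ih (CNProv.mp h (CNProv.theta p))

lemma inCN_prem {A : SNForm} (hA : InCN A) : ∀ l : List ℕ, InCN (prem l A) := by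
  intro l
  induction l with
  | nil => exact hA
  | cons p l ih => exact ⟨⟨trivial, trivial⟩, ih⟩

lemma evalCN_prem (v vN : ℕ → Bool) (A : SNForm) :
    ∀ l : List ℕ, evalCN v vN (prem l A) = true ↔
      ((∀ p ∈ l, vN p = true → v p = false) → evalCN v vN A = true) := by
  intro l
  induction l with
  | nil => simp [prem]
  | cons p l ih =>
      simp only [prem, List.foldr_cons, evalCN] at *
      constructor
      · intro h hc
        rcases Bool.or_eq_true_iff.mp h with h | h
        · exfalso
          have := hc p (by simp)
          simp at h
          simp [h.1, h.2] at this
        · exact (ih.mp h) fun q hq => hc q (by simp [hq])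
      · intro h
        by_cases hp : vN p = true → v p = false
        · refine Bool.or_eq_true_iff.mpr (Or.inr (ih.mpr fun hc => h ?_))
          intro q hq
          rcases List.mem_cons.mp hq with rfl | hq
          · exact hp
          · exact hc q hq
        · push_neg at hp
          simp [hp.1, hp.2]

lemma bridge (v : ℕ → Fin 2 → Bool) (A : SNForm) (hA : InCN A) :
    (SNTruth v A 0 ↔ evalCN (fun p => v p 0) (fun p => !(v p 1)) A = true) := by
  induction A with
  | atom p => simp [SNTruth, evalCN]
  | top => simp [SNTruth, evalCN]
  | bot => simp [SNTruth, evalCN]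
  | one => exact absurd hA (by simp [InCN])
  | neg A ih => simp [SNTruth, evalCN, ih hA]
  | and A B ihA ihB => simp [SNTruth, evalCN, ihA hA.1, ihB hA.2]
  | or A B ihA ihB => simp [SNTruth, evalCN, ihA hA.1, ihB hA.2]
  | imp A B ihA ihB =>
      simp [SNTruth, evalCN, ihA hA.1, ihB hA.2, imp_iff_not_or, or_comm]
  | nn A ih =>
      cases A <;> simp [InCN] at hA
      show ¬ SNTruth v (.atom _) (1 - 0) ↔ _
      simp [SNTruth, evalCN]

/-- Relation between CN and SN: for a formula `A` without `𝟙` in which `N` is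
applied only to atoms, `A` is a theorem of CN iff `SN ⊢ 𝟙 → A`. -/
theorem CN_iff_SN (A : SNForm) (hA : InCN A) :
    CNProv A ↔ SNProv (.imp .one A) := by
  constructor
  · exact cn_to_sn
  · intro h
    have H : ∀ v vN : ℕ → Bool, (∀ p, vN p = true → v p = false) →
        evalCN v vN A = true := by
      intro v vN hc
      set w : ℕ → Fin 2 → Bool := fun p m => if m = 0 then v p else !(vN p) with hw
      have hgood : GoodVal w := by
        intro p hp
        simp only [hw, if_pos rfl] at hp
        show (if (1 : Fin 2) = 0 then v p else !vN p) = true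
        rw [if_neg (by decide)]
        cases hvN : vN p
        · rfl
        · exact absurd hp (by simp [hc p hvN])
      have ht : SNTruth w A 0 := (sn_sound h w hgood 0) rfl
      have hb := (bridge w A hA).mp ht
      have e1 : (fun p => w p 0) = v := by funext p; simp [hw]
      have e2 : (fun p => !(w p 1)) = vN := by funext p; simp [hw]
      rwa [e1, e2] at hb
    apply cn_of_prem (SNAtoms A)
    apply CNProv.taut (inCN_prem hA _)
    intro v vN
    rw [evalCN_prem]
    intro hc
    have hagree : ∀ p ∈ SNAtoms A, vN p = (vN p && !(v p)) := by
      intro p hp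
      rcases Bool.eq_false_or_eq_true (vN p) with h' | h'
      · simp [h', hc p hp h']
      · simp [h']
    rw [evalCN_congr v vN (fun p => vN p && !(v p)) A hagree]
    exact H v _ (by intro p hp; simp at hp; exact hp.2)
end
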